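/- arXiv:math-ph/0508013 — 6 statements merged into one kernel-verified Lean document; each statement's English description precedes it below -/
import Mathlib

section
/- Let u : ℝ × ℝ → ℝ be smooth, 1-periodic in the second variable, with supp u(·,ξ) ⊆ [x₀,x₁] for all ξ, and ∫₀¹ u(x,ξ) dξ = 0 for all x. Then ∫_ℝ u(x, x/ε) dx = ε · ∫_ℝ (∂P[u]/∂x)(x, x/ε) dx · (−1), i.e. ∫_ℝ u(x, x/ε) dx = −ε ∫_ℝ (∂P[u]/∂x)(x, x/ε) dx, for every ε > 0. -/
open MeasureTheory intervalIntegral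

noncomputable def P (u : ℝ → ℝ → ℝ) (x ξ : ℝ) : ℝ :=
  (∫ τ in (0:ℝ)..ξ, u x τ) + ∫ τ in (0:ℝ)..(1:ℝ), τ * u x τ

/-- Differentiation under the interval integral sign, continuous version. -/
lemma hasDerivAt_param (F F' : ℝ → ℝ → ℝ)
    (hF : Continuous fun p : ℝ × ℝ => F p.1 p.2)
    (hF' : Continuous fun p : ℝ × ℝ => F' p.1 p.2)
    (hd : ∀ x τ, HasDerivAt (fun y => F y τ) (F' x τ) x)
    (a b x : ℝ) :
    HasDerivAt (fun y => ∫ τ in a..b, F y τ) (∫ τ in a..b, F' x τ) x := by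
  obtain ⟨C, hC⟩ : ∃ C, ∀ p ∈ Set.Icc (x - 1) (x + 1) ×ˢ Set.uIcc a b,
      ‖(fun p : ℝ × ℝ => F' p.1 p.2) p‖ ≤ C :=
    (isCompact_Icc.prod isCompact_uIcc).exists_bound_of_continuousOn hF'.continuousOn
  have hFc : ∀ y, Continuous (F y) := fun y => hF.comp (Continuous.prodMk_right y)
  have hF'c : ∀ y, Continuous (F' y) := fun y => hF'.comp (Continuous.prodMk_right y)
  refine (intervalIntegral.hasDerivAt_integral_of_dominated_loc_of_deriv_le
    (s := Metric.ball x 1) (bound := fun _ => C) (Metric.ball_mem_nhds x one_pos) ?_ ((hFc x).intervalIntegrable a b) ?_ ?_ ?_ ?_).2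
  · exact Filter.Eventually.of_forall fun y => ((hFc y).aestronglyMeasurable).restrict
  · exact ((hF'c x).aestronglyMeasurable).restrict
  · refine Filter.Eventually.of_forall fun t ht y hy => hC (y, t) ?_
    refine ⟨?_, Set.uIoc_subset_uIcc ht⟩
    have : |y - x| < 1 := by simpa [Real.dist_eq] using hy
    constructor <;> [linarith [abs_le.1 this.le |>.1]; linarith [abs_le.1 this.le |>.2]]
  · exact intervalIntegrable_const
  · exact Filter.Eventually.of_forall fun t _ y _ => hd y t

set_option maxHeartbeats 1000000 in
theorem stmt_2 (u : ℝ → ℝ → ℝ) (x₀ x₁ : ℝ)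
    (hsmooth : ContDiff ℝ (⊤ : ℕ∞) (fun p : ℝ × ℝ => u p.1 p.2))
    (hper : ∀ x ξ, u x (ξ + 1) = u x ξ)
    (hsupp : ∀ ξ x, x ∉ Set.Icc x₀ x₁ → u x ξ = 0)
    (hmean : ∀ x, ∫ ξ in (0:ℝ)..1, u x ξ = 0)
    (ε : ℝ) (hε : 0 < ε) :
    ∫ x : ℝ, u x (x / ε) =
      -ε * ∫ x : ℝ, deriv (fun y => P u y (x / ε)) x := by
  have ucont : Continuous fun p : ℝ × ℝ => u p.1 p.2 := hsmooth.continuous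
  have ucy : ∀ y, Continuous (u y) := fun y => ucont.comp (Continuous.prodMk_right y)
  -- the partial derivative in the first variable
  set v : ℝ → ℝ → ℝ := fun x τ => deriv (fun y => u y τ) x with hv_def
  have hvd : ∀ x τ, HasDerivAt (fun y => u y τ)
      ((fderiv ℝ (fun p : ℝ × ℝ => u p.1 p.2) (x, τ)) (1, 0)) x := by
    intro x τ
    have h1 : HasFDerivAt (fun p : ℝ × ℝ => u p.1 p.2)
        (fderiv ℝ (fun p : ℝ × ℝ => u p.1 p.2) (x, τ)) (x, τ) :=
      (hsmooth.differentiable (by simp) (x, τ)).hasFDerivAt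
    have h2 : HasDerivAt (fun y : ℝ => ((y, τ) : ℝ × ℝ)) ((1 : ℝ), (0 : ℝ)) x :=
      (hasDerivAt_id x).prodMk (hasDerivAt_const x τ)
    exact h1.comp_hasDerivAt x h2
  have hveq : ∀ x τ, v x τ = (fderiv ℝ (fun p : ℝ × ℝ => u p.1 p.2) (x, τ)) (1, 0) :=
    fun x τ => (hvd x τ).deriv
  have hv : ∀ x τ, HasDerivAt (fun y => u y τ) (v x τ) x := by
    intro x τ; rw [hveq]; exact hvd x τ
  have vcont : Continuous fun p : ℝ × ℝ => v p.1 p.2 := by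
    have : Continuous fun p : ℝ × ℝ =>
        (fderiv ℝ (fun q : ℝ × ℝ => u q.1 q.2) p) (1, 0) :=
      (hsmooth.continuous_fderiv (by simp)).clm_apply continuous_const
    simpa [funext fun p : ℝ × ℝ => hveq p.1 p.2] using this
  have vcy : ∀ y, Continuous (v y) := fun y => vcont.comp (Continuous.prodMk_right y)
  clear_value v
  -- the partial derivative of P in the first variable
  set D : ℝ → ℝ → ℝ := fun x ξ =>
    (∫ τ in (0:ℝ)..ξ, v x τ) + ∫ τ in (0:ℝ)..(1:ℝ), τ * v x τ with hD_def
  have hPd : ∀ x ξ, HasDerivAt (fun y => P u y ξ) (D x ξ) x := by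
    intro x ξ
    simp only [hD_def, P]
    exact (hasDerivAt_param u v ucont vcont hv 0 ξ x).add
      (hasDerivAt_param (fun y τ => τ * u y τ) (fun y τ => τ * v y τ)
        (continuous_snd.mul ucont) (continuous_snd.mul vcont)
        (fun y τ => (hv y τ).const_mul τ) 0 1 x)
  have Dcont : Continuous fun p : ℝ × ℝ => D p.1 p.2 := by
    simp only [hD_def]
    refine (continuous_parametric_primitive_of_continuous (f := v) vcont).add ?_
    exact (continuous_parametric_intervalIntegral_of_continuous'
      (f := fun x t => t * v x t) (continuous_snd.mul vcont) 0 1).comp continuous_fst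
  clear_value D
  -- the composite function g
  set g : ℝ → ℝ := fun y => P u y (y / ε) with hg_def
  clear_value g
  -- derivative of g
  have hg : ∀ x, HasDerivAt g (D x (x / ε) + u x (x / ε) / ε) x := by
    intro x
    have hB₁ : HasDerivAt (fun y => ∫ τ in (0:ℝ)..(x / ε), u y τ)
        (∫ τ in (0:ℝ)..(x / ε), v x τ) x := hasDerivAt_param u v ucont vcont hv 0 (x / ε) x
    have hB₂ : HasDerivAt (fun y => ∫ τ in (x / ε)..(y / ε), u y τ) (u x (x / ε) / ε) x := by
      rw [hasDerivAt_iff_isLittleO, Asymptotics.isLittleO_iff]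
      intro c hc
      obtain ⟨δ, hδ, hδ'⟩ := Metric.continuousAt_iff.1 (ucont.continuousAt
        (x := ((x, x / ε) : ℝ × ℝ))) (c * ε) (by positivity)
      have hev : ∀ᶠ y in nhds x, |y - x| < min δ (δ * ε) :=
        eventually_abs_sub_lt x (lt_min hδ (by positivity))
      filter_upwards [hev] with y hy
      have hy1 : |y - x| < δ := lt_of_lt_of_le hy (min_le_left _ _)
      have hy2 : |y / ε - x / ε| < δ := by
        rw [div_sub_div_same, abs_div, abs_of_pos hε]
        rw [div_lt_iff₀ hε]
        exact lt_of_lt_of_le hy (min_le_right _ _)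
      have key : ∀ τ ∈ Set.uIoc (x / ε) (y / ε), ‖u y τ - u x (x / ε)‖ ≤ c * ε := by
        intro τ hτ
        have hτ' : |τ - x / ε| ≤ |y / ε - x / ε| := by
          rcases le_total (x / ε) (y / ε) with h | h
          · rw [Set.uIoc_of_le h] at hτ
            rw [abs_of_nonneg (by linarith [hτ.1.le]), abs_of_nonneg (by linarith)]
            linarith [hτ.2]
          · rw [Set.uIoc_of_ge h] at hτ
            rw [abs_of_nonpos (by linarith [hτ.2]), abs_of_nonpos (by linarith)]
            linarith [hτ.1.le]
        have hd : dist ((y, τ) : ℝ × ℝ) ((x, x / ε) : ℝ × ℝ) < δ := by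
          rw [Prod.dist_eq]
          exact max_lt (by rwa [Real.dist_eq]) (by rw [Real.dist_eq]; linarith [hτ'.trans_lt hy2])
        have := hδ' hd
        rw [Real.dist_eq] at this
        exact le_of_lt (by simpa [Real.norm_eq_abs] using this)
      have hint : IntervalIntegrable (u y) MeasureTheory.volume (x / ε) (y / ε) :=
        (ucy y).intervalIntegrable _ _
      have hεne : ε ≠ 0 := hε.ne'
      have heq : (∫ τ in (x / ε)..(y / ε), u y τ) - (∫ τ in (x / ε)..(x / ε), u x τ)
          - (y - x) • (u x (x / ε) / ε)
          = ∫ τ in (x / ε)..(y / ε), (u y τ - u x (x / ε)) := by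
        rw [intervalIntegral.integral_same,
          intervalIntegral.integral_sub hint intervalIntegrable_const,
          intervalIntegral.integral_const]
        simp only [smul_eq_mul, sub_zero]
        field_simp
      rw [heq]
      calc ‖∫ τ in (x / ε)..(y / ε), (u y τ - u x (x / ε))‖
          ≤ c * ε * |y / ε - x / ε| := intervalIntegral.norm_integral_le_of_norm_le_const key
        _ = c * ‖y - x‖ := by
            rw [div_sub_div_same, abs_div, abs_of_pos hε, Real.norm_eq_abs]
            field_simp
    have hC : HasDerivAt (fun y => ∫ τ in (0:ℝ)..(1:ℝ), τ * u y τ)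
        (∫ τ in (0:ℝ)..(1:ℝ), τ * v x τ) x :=
      hasDerivAt_param (fun y τ => τ * u y τ) (fun y τ => τ * v y τ)
        (continuous_snd.mul ucont) (continuous_snd.mul vcont)
        (fun y τ => (hv y τ).const_mul τ) 0 1 x
    have hsum := (hB₁.add hB₂).add hC
    have hgeq : g = fun y => ((∫ τ in (0:ℝ)..(x / ε), u y τ)
        + ∫ τ in (x / ε)..(y / ε), u y τ) + ∫ τ in (0:ℝ)..(1:ℝ), τ * u y τ := by
      funext y
      simp only [hg_def, P]
      rw [intervalIntegral.integral_add_adjacent_intervals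
        ((ucy y).intervalIntegrable 0 (x / ε)) ((ucy y).intervalIntegrable (x / ε) (y / ε))]
    rw [hgeq]
    convert hsum using 1
    · rfl
    · rfl
    · rfl
    simp only [hD_def]
    ring
  -- g has compact support
  have hg0 : ∀ x ∉ Set.Icc x₀ x₁, g x = 0 := by
    intro x hx
    have h0 : ∀ τ, u x τ = 0 := fun τ => hsupp τ x hx
    simp [hg_def, P, h0]
  have hgsupp : HasCompactSupport g := HasCompactSupport.intro isCompact_Icc hg0
  have hgdiff : Differentiable ℝ g := fun x => (hg x).differentiableAt
  have hgderiv : deriv g = fun x => D x (x / ε) + u x (x / ε) / ε :=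
    funext fun x => (hg x).deriv
  have hf₁cont : Continuous fun x => u x (x / ε) :=
    ucont.comp (continuous_id.prodMk (continuous_id.div_const ε))
  have hf₂cont : Continuous fun x => D x (x / ε) :=
    Dcont.comp (continuous_id.prodMk (continuous_id.div_const ε))
  have hgderivcont : Continuous (deriv g) := by
    rw [hgderiv]; exact hf₂cont.add (hf₁cont.div_const ε)
  have hgc1 : ContDiff ℝ 1 g := contDiff_one_iff_deriv.2 ⟨hgdiff, hgderivcont⟩
  -- derivative function has vanishing integral
  have hderivint : Integrable (deriv g) :=
    hgderivcont.integrable_of_hasCompactSupport hgsupp.deriv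
  have hzero : ∫ x : ℝ, deriv g x = 0 := by
    rw [← intervalIntegral.integral_Iic_add_Ioi (b := (0:ℝ))
      hderivint.integrableOn hderivint.integrableOn,
      hgsupp.integral_Iic_deriv_eq hgc1 0, hgsupp.integral_Ioi_deriv_eq hgc1 0]
    ring
  -- support of v and D
  have hv0 : ∀ τ x, x ∉ Set.Icc x₀ x₁ → v x τ = 0 := by
    intro τ x hx
    have hmem : (Set.Icc x₀ x₁)ᶜ ∈ nhds x := (isClosed_Icc.isOpen_compl).mem_nhds hx
    have : (fun y => u y τ) =ᶠ[nhds x] fun _ => (0:ℝ) := by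
      filter_upwards [hmem] with y hy
      exact hsupp τ y hy
    rw [hv_def]
    simp only
    rw [this.deriv_eq, deriv_const]
  have hD0 : ∀ x, x ∉ Set.Icc x₀ x₁ → D x (x / ε) = 0 := by
    intro x hx
    have h0 : ∀ τ, v x τ = 0 := fun τ => hv0 τ x hx
    simp [hD_def, h0]
  -- integrability
  have hf₁int : Integrable fun x => u x (x / ε) :=
    hf₁cont.integrable_of_hasCompactSupport
      (HasCompactSupport.intro isCompact_Icc fun x hx => hsupp _ x hx)
  have hf₂int : Integrable fun x => D x (x / ε) :=
    hf₂cont.integrable_of_hasCompactSupport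
      (HasCompactSupport.intro isCompact_Icc hD0)
  -- conclusion
  have hsplit : ∫ x : ℝ, deriv g x
      = (∫ x : ℝ, D x (x / ε)) + (∫ x : ℝ, u x (x / ε)) / ε := by
    rw [hgderiv, MeasureTheory.integral_add hf₂int (hf₁int.div_const ε),
      MeasureTheory.integral_div]
  have hRHS : (fun x : ℝ => deriv (fun y => P u y (x / ε)) x)
      = fun x : ℝ => D x (x / ε) := funext fun x => (hPd x (x / ε)).deriv
  rw [hRHS]
  rw [hsplit] at hzero
  have hεne : ε ≠ 0 := hε.ne'
  field_simp at hzero ⊢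
  linarith
end

section
/- Let u : ℝ × ℝ → ℝ be smooth, 1-periodic in the second variable, with supp u(·,ξ) ⊆ [x₀,x₁] for all ξ. Then for every natural number n ≥ 1 there exists C > 0 such that for all ε ∈ (0,1], |∫_ℝ u(x, x/ε) dx − ∫_ℝ (∫₀¹ u(x,ξ) dξ) dx| ≤ C εⁿ. -/
open MeasureTheory intervalIntegral Metric Set
open scoped ContDiff

set_option synthInstance.maxHeartbeats 1000000
set_option maxHeartbeats 1000000
set_option linter.unusedSectionVars false
set_option linter.unusedVariables false

section A
variable {E : Type} [NormedAddCommGroup E] [NormedSpace ℝ E] [ProperSpace E]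

theorem aux_param_cont {F : Type} [NormedAddCommGroup F] [NormedSpace ℝ F] [CompleteSpace F]
    (H : E → ℝ → F) (hH : Continuous (fun q : E × ℝ => H q.1 q.2)) :
    Continuous (fun x : E => ∫ t in (0:ℝ)..1, H x t) := by
  have := continuous_parametric_primitive_of_continuous (μ := volume) (f := H) (a₀ := 0) hH
  exact (this.comp (continuous_id.prodMk continuous_const) : _)

theorem aux_param_smooth :
    ∀ (k : ℕ) {F : Type} [NormedAddCommGroup F] [NormedSpace ℝ F] [CompleteSpace F]
      (H : E → ℝ → F), ContDiff ℝ ∞ (fun q : E × ℝ => H q.1 q.2) →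
      ContDiff ℝ (k : ℕ) (fun x : E => ∫ t in (0:ℝ)..1, H x t) := by
  intro k
  induction k with
  | zero =>
    intro F _ _ _ H hH
    rw [show ((0:ℕ) : WithTop ℕ∞) = 0 by rfl, contDiff_zero]
    exact aux_param_cont H hH.continuous
  | succ n ih =>
    intro F _ _ _ H hH
    set Hun : E × ℝ → F := fun q => H q.1 q.2 with hHun
    set H' : E → ℝ → (E →L[ℝ] F) := fun x t => (fderiv ℝ Hun (x, t)).comp (.inl ℝ E ℝ) with hH'
    have hdiff : ∀ (t : ℝ) (x : E), HasFDerivAt (fun y => H y t) (H' x t) x := by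
      intro t x
      have h1 : HasFDerivAt (fun y : E => (y, t)) (ContinuousLinearMap.inl ℝ E ℝ) x :=
        (hasFDerivAt_id x).prodMk (hasFDerivAt_const t x)
      exact ((hH.differentiable (by simp) (x, t)).hasFDerivAt.comp x h1 : _)
    have hH'smooth : ContDiff ℝ ∞ (fun q : E × ℝ => H' q.1 q.2) := by
      have := (hH.fderiv_right (m := ∞) (by exact_mod_cast le_top))
      exact this.clm_comp contDiff_const
    have key : ∀ x : E, HasFDerivAt (fun y : E => ∫ t in (0:ℝ)..1, H y t)
        (∫ t in (0:ℝ)..1, H' x t) x := by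
      intro x
      obtain ⟨M, hM⟩ : ∃ M, ∀ p ∈ (closedBall x 1 ×ˢ Icc (0:ℝ) 1), ‖H' p.1 p.2‖ ≤ M := by
        have hc : IsCompact (closedBall x 1 ×ˢ Icc (0:ℝ) 1) :=
          (isCompact_closedBall x 1).prod isCompact_Icc
        obtain ⟨M, hM⟩ := hc.exists_bound_of_continuousOn hH'smooth.continuous.continuousOn
        exact ⟨M, hM⟩
      apply intervalIntegral.hasFDerivAt_integral_of_dominated_of_fderiv_le
        (F := H) (F' := H') (bound := fun _ => M) (s := ball x 1) (ball_mem_nhds x one_pos)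
      · exact Filter.Eventually.of_forall fun y =>
          ((hH.continuous.comp (Continuous.prodMk_right y)).aestronglyMeasurable)
      · exact ((hH.continuous.comp (Continuous.prodMk_right x)).intervalIntegrable 0 1)
      · exact ((hH'smooth.continuous.comp (Continuous.prodMk_right x)).aestronglyMeasurable)
      · refine Filter.Eventually.of_forall fun t ht y hy => hM (y, t) ?_
        exact ⟨ball_subset_closedBall hy, by
          simpa [Set.uIoc_of_le (zero_le_one' ℝ)] using Set.Ioc_subset_Icc_self ht⟩
      · exact intervalIntegrable_const
      · exact Filter.Eventually.of_forall fun t ht y hy => hdiff t y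
    rw [show ((n + 1 : ℕ) : WithTop ℕ∞) = (n : ℕ) + 1 by push_cast; ring]
    rw [contDiff_succ_iff_fderiv]
    refine ⟨fun x => (key x).differentiableAt, by simp, ?_⟩
    have : (fderiv ℝ fun y : E => ∫ t in (0:ℝ)..1, H y t) =
        fun x => ∫ t in (0:ℝ)..1, H' x t := funext fun x => (key x).fderiv
    rw [this]
    exact ih H' hH'smooth

theorem aux_param_smooth' {F : Type} [NormedAddCommGroup F] [NormedSpace ℝ F] [CompleteSpace F]
    (H : E → ℝ → F) (hH : ContDiff ℝ ∞ (fun q : E × ℝ => H q.1 q.2)) :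
    ContDiff ℝ ∞ (fun x : E => ∫ t in (0:ℝ)..1, H x t) :=
  contDiff_infty.2 fun k => aux_param_smooth k H hH

end A

theorem primitive_smooth (v : ℝ → ℝ → ℝ) (hv : ContDiff ℝ ∞ (fun p : ℝ × ℝ => v p.1 p.2)) :
    ContDiff ℝ ∞ (fun p : ℝ × ℝ => ∫ t in (0:ℝ)..p.2, v p.1 t) := by
  have heq : (fun p : ℝ × ℝ => ∫ t in (0:ℝ)..p.2, v p.1 t)
      = fun p : ℝ × ℝ => p.2 • ∫ s in (0:ℝ)..1, v p.1 (s * p.2) := by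
    funext p
    rcases eq_or_ne p.2 0 with h | h
    · simp [h]
    · rw [intervalIntegral.integral_comp_mul_right (fun t => v p.1 t) h]
      simp only [zero_mul, one_mul, smul_eq_mul, ← mul_assoc, mul_inv_cancel₀ h, one_mul]
  rw [heq]
  refine ContDiff.smul (contDiff_snd.of_le le_top) ?_
  refine aux_param_smooth' (E := ℝ × ℝ) _ ?_
  exact hv.comp (((contDiff_fst.comp contDiff_fst).prodMk
    (contDiff_snd.mul (contDiff_snd.comp contDiff_fst))))

theorem hasDerivAt_fst {G : ℝ → ℝ → ℝ} (hG : ContDiff ℝ ∞ (fun p : ℝ × ℝ => G p.1 p.2))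
    (x ξ : ℝ) :
    HasDerivAt (fun y => G y ξ) (fderiv ℝ (fun p : ℝ × ℝ => G p.1 p.2) (x, ξ) (1, 0)) x := by
  have h1 : HasDerivAt (fun y : ℝ => (y, ξ)) ((1:ℝ), (0:ℝ)) x :=
    (hasDerivAt_id x).prodMk (hasDerivAt_const x ξ)
  exact ((hG.differentiable (by simp) (x, ξ)).hasFDerivAt.comp_hasDerivAt x h1 : _)

theorem hasDerivAt_snd {G : ℝ → ℝ → ℝ} (hG : ContDiff ℝ ∞ (fun p : ℝ × ℝ => G p.1 p.2))
    (x ξ : ℝ) :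
    HasDerivAt (fun ζ => G x ζ) (fderiv ℝ (fun p : ℝ × ℝ => G p.1 p.2) (x, ξ) (0, 1)) ξ := by
  have h1 : HasDerivAt (fun ζ : ℝ => (x, ζ)) ((0:ℝ), (1:ℝ)) ξ :=
    (hasDerivAt_const ξ x).prodMk (hasDerivAt_id ξ)
  exact ((hG.differentiable (by simp) (x, ξ)).hasFDerivAt.comp_hasDerivAt ξ h1 : _)

theorem hasDerivAt_diag {G : ℝ → ℝ → ℝ} (hG : ContDiff ℝ ∞ (fun p : ℝ × ℝ => G p.1 p.2))
    (c x : ℝ) :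
    HasDerivAt (fun y => G y (y * c))
      (fderiv ℝ (fun p : ℝ × ℝ => G p.1 p.2) (x, x * c) (1, c)) x := by
  have h1 : HasDerivAt (fun y : ℝ => (y, y * c)) ((1:ℝ), (c:ℝ)) x := by
    have := (hasDerivAt_id x).mul_const c
    simpa using (hasDerivAt_id x).prodMk this
  exact ((hG.differentiable (by simp) (x, x*c)).hasFDerivAt.comp_hasDerivAt x h1 : _)

theorem px_smooth {G : ℝ → ℝ → ℝ} (hG : ContDiff ℝ ∞ (fun p : ℝ × ℝ => G p.1 p.2)) :
    ContDiff ℝ ∞ (fun p : ℝ × ℝ => fderiv ℝ (fun q : ℝ × ℝ => G q.1 q.2) p (1, 0)) :=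
  (hG.fderiv_right (m := ∞) (by exact_mod_cast le_top)).clm_apply contDiff_const

theorem hasDerivAt_param_integral {f fx : ℝ → ℝ → ℝ}
    (hf : Continuous fun p : ℝ × ℝ => f p.1 p.2)
    (hfx : Continuous fun p : ℝ × ℝ => fx p.1 p.2)
    (hd : ∀ x ξ, HasDerivAt (fun y => f y ξ) (fx x ξ) x)
    (c x : ℝ) :
    HasDerivAt (fun y => ∫ t in (0:ℝ)..c, f y t) (∫ t in (0:ℝ)..c, fx x t) x := by
  obtain ⟨M, hM⟩ : ∃ M, ∀ p ∈ (closedBall x 1 ×ˢ uIcc (0:ℝ) c), ‖fx p.1 p.2‖ ≤ M := by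
    have hc : IsCompact (closedBall x 1 ×ˢ uIcc (0:ℝ) c) :=
      (isCompact_closedBall x 1).prod isCompact_uIcc
    exact hc.exists_bound_of_continuousOn hfx.continuousOn
  refine (intervalIntegral.hasDerivAt_integral_of_dominated_loc_of_deriv_le
    (F := f) (F' := fx) (bound := fun _ => M) (s := ball x 1) (ball_mem_nhds x one_pos) ?_ ?_ ?_ ?_ ?_ ?_).2
  · exact Filter.Eventually.of_forall fun y =>
      ((hf.comp (Continuous.prodMk_right y)).aestronglyMeasurable)
  · exact ((hf.comp (Continuous.prodMk_right x)).intervalIntegrable 0 c)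
  · exact ((hfx.comp (Continuous.prodMk_right x)).aestronglyMeasurable)
  · refine Filter.Eventually.of_forall fun t ht y hy => hM (y, t) ?_
    exact ⟨ball_subset_closedBall hy, Set.uIoc_subset_uIcc ht⟩
  · exact intervalIntegrable_const
  · exact Filter.Eventually.of_forall fun t _ y _ => hd y t

theorem integrable_of_supp {h : ℝ → ℝ} (hc : Continuous h) {a b : ℝ}
    (hs : ∀ x, x ∉ Set.Icc a b → h x = 0) : Integrable h :=
  hc.integrable_of_hasCompactSupport (HasCompactSupport.intro isCompact_Icc hs)

theorem integral_deriv_supp_zero {g g' : ℝ → ℝ} {x₀ x₁ : ℝ}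
    (hd : ∀ x, HasDerivAt g (g' x) x) (hg' : Continuous g')
    (hgs : ∀ x, x ∉ Set.Icc x₀ x₁ → g x = 0)
    (hg's : ∀ x, x ∉ Set.Icc x₀ x₁ → g' x = 0) :
    (∫ x : ℝ, g' x) = 0 := by
  set a := min x₀ x₁ - 1 with ha
  set b := max x₀ x₁ + 1 with hb
  have hab : a ≤ b := by
    have := min_le_max (a := x₀) (b := x₁); dsimp [a, b]; linarith
  have hIcc : Set.Icc x₀ x₁ ⊆ Set.Ioc a b := by
    intro x hx
    rcases hx with ⟨h1, h2⟩
    constructor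
    · have : min x₀ x₁ ≤ x := le_trans (min_le_left _ _) h1
      dsimp [a]; linarith
    · have : x ≤ max x₀ x₁ := le_trans h2 (le_max_right _ _)
      dsimp [b]; linarith
  have h1 : (∫ x : ℝ, g' x) = ∫ x in a..b, g' x := by
    rw [intervalIntegral.integral_of_le hab]
    exact (setIntegral_eq_integral_of_forall_compl_eq_zero
      (fun x hx => hg's x (fun hmem => hx (hIcc hmem)))).symm
  have h2 : (∫ x in a..b, g' x) = g b - g a :=
    intervalIntegral.integral_eq_sub_of_hasDerivAt (fun x _ => hd x)
      (hg'.intervalIntegrable a b)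
  have hax : a < x₀ := by have := min_le_left x₀ x₁; rw [ha]; linarith
  have hbx : x₁ < b := by have := le_max_right x₀ x₁; rw [hb]; linarith
  have hga : g a = 0 := hgs a (fun hmem => absurd hmem.1 (not_le.2 hax))
  have hgb : g b = 0 := hgs b (fun hmem => absurd hmem.2 (not_le.2 hbx))
  rw [h1, h2, hga, hgb, sub_zero]

theorem cont_diag {h : ℝ → ℝ → ℝ} (hc : Continuous fun p : ℝ × ℝ => h p.1 p.2) (c : ℝ) :
    Continuous fun x : ℝ => h x (x * c) :=
  hc.comp (continuous_id.prodMk (continuous_id.mul continuous_const))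

theorem key_lemma (n : ℕ) : ∀ (v : ℝ → ℝ → ℝ) (x₀ x₁ : ℝ),
    ContDiff ℝ ∞ (fun p : ℝ × ℝ => v p.1 p.2) →
    (∀ x ξ, v x (ξ + 1) = v x ξ) →
    (∀ ξ x, x ∉ Set.Icc x₀ x₁ → v x ξ = 0) →
    (∀ x, (∫ ξ in (0:ℝ)..1, v x ξ) = 0) →
    ∃ C > 0, ∀ ε ∈ Set.Ioc (0:ℝ) 1, |∫ x : ℝ, v x (x / ε)| ≤ C * ε ^ n := by
  induction n with
  | zero =>
    intro v x₀ x₁ hv hper hsupp _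
    obtain ⟨M, hM⟩ : ∃ M, ∀ p ∈ (Set.Icc x₀ x₁ ×ˢ Set.Icc (0:ℝ) 1), ‖v p.1 p.2‖ ≤ M :=
      (isCompact_Icc.prod isCompact_Icc).exists_bound_of_continuousOn
        hv.continuous.continuousOn
    set M' := max M 0 with hM'
    refine ⟨M' * |x₁ - x₀| + 1, by positivity, fun ε hε => ?_⟩
    have hbd : ∀ x ∈ Set.Icc x₀ x₁, ‖v x (x / ε)‖ ≤ M' := by
      intro x hx
      have hper' : Function.Periodic (v x) 1 := fun η => hper x η
      have hfr : v x (Int.fract (x / ε)) = v x (x / ε) := by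
        rw [Int.fract]
        have := hper'.sub_int_mul_eq (x := x / ε) (n := ⌊x / ε⌋)
        simpa using this
      rw [← hfr]
      refine le_trans (hM (x, Int.fract (x / ε)) ⟨hx, ⟨Int.fract_nonneg _, (Int.fract_lt_one _).le⟩⟩)
        (le_max_left _ _)
    have h0 : (∫ x : ℝ, v x (x / ε)) = ∫ x in Set.Icc x₀ x₁, v x (x / ε) :=
      (setIntegral_eq_integral_of_forall_compl_eq_zero fun x hx => hsupp _ x hx).symm
    have h1 : ‖∫ x in Set.Icc x₀ x₁, v x (x / ε)‖ ≤ M' * (volume (Set.Icc x₀ x₁)).toReal :=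
      norm_setIntegral_le_of_norm_le_const (by rw [Real.volume_Icc]; exact ENNReal.ofReal_lt_top)
        hbd
    have h2 : (volume (Set.Icc x₀ x₁)).toReal ≤ |x₁ - x₀| := by
      rw [Real.volume_Icc]
      rcases le_total (x₁ - x₀) 0 with h | h
      · rw [ENNReal.ofReal_of_nonpos h]; simp [abs_nonneg]
      · rw [ENNReal.toReal_ofReal h]; exact le_abs_self _
    have hM'0 : 0 ≤ M' := le_max_right _ _
    calc |∫ x : ℝ, v x (x / ε)| = ‖∫ x in Set.Icc x₀ x₁, v x (x / ε)‖ := by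
          rw [h0]; rfl
      _ ≤ M' * (volume (Set.Icc x₀ x₁)).toReal := h1
      _ ≤ M' * |x₁ - x₀| := by nlinarith
      _ ≤ (M' * |x₁ - x₀| + 1) * ε ^ 0 := by simp
  | succ n ih =>
    intro v x₀ x₁ hv hper hsupp hmean
    -- the partial derivative in x
    set vx : ℝ → ℝ → ℝ := fun x ξ => fderiv ℝ (fun p : ℝ × ℝ => v p.1 p.2) (x, ξ) (1, 0)
      with hvxdef
    have hvx_smooth : ContDiff ℝ ∞ (fun p : ℝ × ℝ => vx p.1 p.2) := px_smooth hv
    have hvx_d : ∀ x ξ, HasDerivAt (fun y => v y ξ) (vx x ξ) x := fun x ξ => hasDerivAt_fst hv x ξ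
    have hvx_per : ∀ x ξ, vx x (ξ + 1) = vx x ξ := by
      intro x ξ
      have h1 := hvx_d x (ξ + 1)
      have h2 := hvx_d x ξ
      rw [show (fun y => v y (ξ + 1)) = fun y => v y ξ from funext fun y => hper y ξ] at h1
      exact h1.unique h2
    have hvx_supp : ∀ ξ x, x ∉ Set.Icc x₀ x₁ → vx x ξ = 0 := by
      intro ξ x hx
      have h1 := hvx_d x ξ
      have hev : (fun _ : ℝ => (0:ℝ)) =ᶠ[nhds x] (fun y => v y ξ) := by
        filter_upwards [isClosed_Icc.isOpen_compl.mem_nhds hx] with y hy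
        exact (hsupp ξ y hy).symm
      exact ((h1.congr_of_eventuallyEq hev).unique (hasDerivAt_const x 0))
    have hvx_mean : ∀ x, (∫ η in (0:ℝ)..1, vx x η) = 0 := by
      intro x
      have h1 := hasDerivAt_param_integral hv.continuous hvx_smooth.continuous hvx_d 1 x
      rw [show (fun y => ∫ t in (0:ℝ)..1, v y t) = fun _ => (0:ℝ) from funext hmean] at h1
      exact h1.unique (hasDerivAt_const x 0)
    -- W, Wm, w
    set W : ℝ → ℝ → ℝ := fun x ξ => ∫ η in (0:ℝ)..ξ, vx x η with hWdef
    have hW_smooth : ContDiff ℝ ∞ (fun p : ℝ × ℝ => W p.1 p.2) := primitive_smooth vx hvx_smooth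
    set Wm : ℝ → ℝ := fun x => ∫ η in (0:ℝ)..1, W x η with hWmdef
    have hWm_smooth : ContDiff ℝ ∞ Wm := aux_param_smooth' (E := ℝ) W hW_smooth
    have hWcont : Continuous (fun p : ℝ × ℝ => W p.1 p.2) := hW_smooth.continuous
    have hvx_cont : Continuous (fun p : ℝ × ℝ => vx p.1 p.2) := hvx_smooth.continuous
    have hvx_slice : ∀ x, Continuous (vx x) := fun x => hvx_cont.comp (Continuous.prodMk_right x)
    have hW_per : ∀ x ξ, W x (ξ + 1) = W x ξ := by
      intro x ξ
      have hint : ∀ a b : ℝ, IntervalIntegrable (vx x) volume a b := fun a b =>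
        (hvx_slice x).intervalIntegrable a b
      have hsplit : (∫ η in (0:ℝ)..(ξ+1), vx x η)
          = (∫ η in (0:ℝ)..ξ, vx x η) + ∫ η in ξ..(ξ+1), vx x η :=
        (intervalIntegral.integral_add_adjacent_intervals (hint 0 ξ) (hint ξ (ξ+1))).symm
      have hper' : Function.Periodic (vx x) 1 := fun η => hvx_per x η
      have h2 : (∫ η in ξ..(ξ+1), vx x η) = ∫ η in (0:ℝ)..(0+1:ℝ), vx x η :=
        hper'.intervalIntegral_add_eq ξ 0
      have h3 : (∫ η in (0:ℝ)..(0+1:ℝ), vx x η) = 0 := by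
        rw [zero_add]; exact hvx_mean x
      show (∫ η in (0:ℝ)..(ξ+1), vx x η) = ∫ η in (0:ℝ)..ξ, vx x η
      rw [hsplit, h2, h3, add_zero]
    have hW_supp : ∀ ξ x, x ∉ Set.Icc x₀ x₁ → W x ξ = 0 := by
      intro ξ x hx
      show (∫ η in (0:ℝ)..ξ, vx x η) = 0
      simp [show ∀ η, vx x η = 0 from fun η => hvx_supp η x hx]
    have hWm_supp : ∀ x, x ∉ Set.Icc x₀ x₁ → Wm x = 0 := by
      intro x hx
      show (∫ η in (0:ℝ)..1, W x η) = 0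
      simp [show ∀ η, W x η = 0 from fun η => hW_supp η x hx]
    set w : ℝ → ℝ → ℝ := fun x ξ => W x ξ - Wm x with hwdef
    have hw_smooth : ContDiff ℝ ∞ (fun p : ℝ × ℝ => w p.1 p.2) :=
      hW_smooth.sub (hWm_smooth.comp contDiff_fst)
    have hw_per : ∀ x ξ, w x (ξ + 1) = w x ξ := fun x ξ => by
      show W x (ξ+1) - Wm x = W x ξ - Wm x
      rw [hW_per]
    have hw_supp : ∀ ξ x, x ∉ Set.Icc x₀ x₁ → w x ξ = 0 := fun ξ x hx => by
      show W x ξ - Wm x = 0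
      rw [hW_supp ξ x hx, hWm_supp x hx, sub_zero]
    have hw_mean : ∀ x, (∫ ξ in (0:ℝ)..1, w x ξ) = 0 := by
      intro x
      have hWint : IntervalIntegrable (fun ξ => W x ξ) volume 0 1 :=
        (hWcont.comp (Continuous.prodMk_right x)).intervalIntegrable 0 1
      show (∫ ξ in (0:ℝ)..1, (W x ξ - Wm x)) = 0
      rw [intervalIntegral.integral_sub hWint intervalIntegrable_const,
        intervalIntegral.integral_const]
      show Wm x - (1 - 0) • Wm x = 0
      simp
    -- V
    set V : ℝ → ℝ → ℝ := fun x ξ => ∫ η in (0:ℝ)..ξ, v x η with hVdef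
    have hV_smooth : ContDiff ℝ ∞ (fun p : ℝ × ℝ => V p.1 p.2) := primitive_smooth v hv
    have pV1 : ∀ x ξ, HasDerivAt (fun y => V y ξ) (W x ξ) x := fun x ξ =>
      hasDerivAt_param_integral hv.continuous hvx_cont hvx_d ξ x
    have pV2 : ∀ x ξ, HasDerivAt (fun ζ => V x ζ) (v x ξ) ξ := by
      intro x ξ
      have hc : Continuous (v x) := hv.continuous.comp (Continuous.prodMk_right x)
      exact intervalIntegral.integral_hasDerivAt_right (hc.intervalIntegrable 0 ξ)
        (hc.stronglyMeasurableAtFilter _ _) hc.continuousAt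
    have hVfd1 : ∀ x ξ, fderiv ℝ (fun p : ℝ × ℝ => V p.1 p.2) (x, ξ) (1, 0) = W x ξ :=
      fun x ξ => (hasDerivAt_fst hV_smooth x ξ).unique (pV1 x ξ)
    have hVfd2 : ∀ x ξ, fderiv ℝ (fun p : ℝ × ℝ => V p.1 p.2) (x, ξ) (0, 1) = v x ξ :=
      fun x ξ => (hasDerivAt_snd hV_smooth x ξ).unique (pV2 x ξ)
    have hV_supp : ∀ ξ x, x ∉ Set.Icc x₀ x₁ → V x ξ = 0 := fun ξ x hx => by
      show (∫ η in (0:ℝ)..ξ, v x η) = 0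
      simp [show ∀ η, v x η = 0 from fun η => hsupp η x hx]
    have hintWm : Integrable Wm := integrable_of_supp hWm_smooth.continuous hWm_supp
    have hWm_int_zero : (∫ x : ℝ, Wm x) = 0 := by
      have hVm_d : ∀ x, HasDerivAt (fun y => ∫ η in (0:ℝ)..1, V y η) (Wm x) x := fun x =>
        hasDerivAt_param_integral hV_smooth.continuous hWcont pV1 1 x
      refine integral_deriv_supp_zero (x₀ := x₀) (x₁ := x₁) hVm_d hWm_smooth.continuous ?_ hWm_supp
      intro x hx
      simp [show ∀ η, V x η = 0 from fun η => hV_supp η x hx]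
    -- apply induction hypothesis to w
    obtain ⟨C, hC0, hC⟩ := ih w x₀ x₁ hw_smooth hw_per hw_supp hw_mean
    refine ⟨C, hC0, fun ε hε => ?_⟩
    obtain ⟨hε0, hε1⟩ := hε
    have hεne : ε ≠ 0 := ne_of_gt hε0
    have hdiagc : Continuous fun x : ℝ => (x, x * ε⁻¹) :=
      continuous_id.prodMk (continuous_id.mul continuous_const)
    have hVd : ∀ x, HasDerivAt (fun y => V y (y * ε⁻¹))
        (W x (x * ε⁻¹) + ε⁻¹ * v x (x * ε⁻¹)) x := by
      intro x
      have h := hasDerivAt_diag hV_smooth ε⁻¹ x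
      have hdec : ((1:ℝ), (ε⁻¹:ℝ)) = ((1:ℝ), (0:ℝ)) + ε⁻¹ • ((0:ℝ), (1:ℝ)) := by
        simp [Prod.ext_iff]
      rw [hdec, ContinuousLinearMap.map_add, ContinuousLinearMap.map_smul] at h
      rw [hVfd1 x (x * ε⁻¹), hVfd2 x (x * ε⁻¹), smul_eq_mul] at h
      exact h
    have hWdiagc : Continuous fun x : ℝ => W x (x * ε⁻¹) := cont_diag hWcont ε⁻¹
    have hvdiagc : Continuous fun x : ℝ => v x (x * ε⁻¹) := cont_diag hv.continuous ε⁻¹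
    have hint1 : Integrable fun x : ℝ => W x (x * ε⁻¹) :=
      integrable_of_supp hWdiagc (fun x hx => hW_supp _ x hx)
    have hint2 : Integrable fun x : ℝ => v x (x * ε⁻¹) :=
      integrable_of_supp hvdiagc (fun x hx => hsupp _ x hx)
    have hzero : (∫ x : ℝ, (W x (x * ε⁻¹) + ε⁻¹ * v x (x * ε⁻¹))) = 0 := by
      refine integral_deriv_supp_zero (x₀ := x₀) (x₁ := x₁) hVd ?_ ?_ ?_
      · exact hWdiagc.add (continuous_const.mul hvdiagc)
      · exact fun x hx => hV_supp _ x hx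
      · intro x hx
        rw [hW_supp _ x hx, hsupp _ x hx]; ring
    rw [integral_add hint1 (hint2.const_mul ε⁻¹), MeasureTheory.integral_const_mul ε⁻¹ fun x : ℝ => v x (x * ε⁻¹)] at hzero
    have hWw : (∫ x : ℝ, W x (x * ε⁻¹)) = ∫ x : ℝ, w x (x * ε⁻¹) := by
      have h1 : (∫ x : ℝ, w x (x * ε⁻¹))
          = (∫ x : ℝ, W x (x * ε⁻¹)) - ∫ x : ℝ, Wm x := by
        rw [← integral_sub hint1 hintWm]
      rw [h1, hWm_int_zero, sub_zero]
    have hfinal : (∫ x : ℝ, v x (x * ε⁻¹)) = -ε * ∫ x : ℝ, w x (x * ε⁻¹) := by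
      rw [← hWw]
      have hε' : ε⁻¹ ≠ 0 := inv_ne_zero hεne
      field_simp at hzero ⊢
      linarith
    have hdiv : ∀ (h : ℝ → ℝ → ℝ), (∫ x : ℝ, h x (x / ε)) = ∫ x : ℝ, h x (x * ε⁻¹) := by
      intro h
      simp only [div_eq_mul_inv]
    rw [hdiv v, hfinal, abs_mul, abs_neg, abs_of_pos hε0]
    have hCw := hC ε ⟨hε0, hε1⟩
    rw [hdiv w] at hCw
    calc ε * |∫ x : ℝ, w x (x * ε⁻¹)| ≤ ε * (C * ε ^ n) :=
          mul_le_mul_of_nonneg_left hCw (le_of_lt hε0)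
      _ = C * ε ^ (n + 1) := by ring


theorem cont_diag' {h : ℝ → ℝ → ℝ} (hc : Continuous fun p : ℝ × ℝ => h p.1 p.2) (c : ℝ) :
    Continuous fun x : ℝ => h x (x / c) :=
  hc.comp (continuous_id.prodMk (continuous_id.div_const c))

theorem stmt_3 (u : ℝ → ℝ → ℝ) (x₀ x₁ : ℝ)
    (hsmooth : ContDiff ℝ (⊤ : ℕ∞) (fun p : ℝ × ℝ => u p.1 p.2))
    (hper : ∀ x ξ, u x (ξ + 1) = u x ξ)
    (hsupp : ∀ ξ x, x ∉ Set.Icc x₀ x₁ → u x ξ = 0) :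
    ∀ n : ℕ, 1 ≤ n → ∃ C > 0, ∀ ε ∈ Set.Ioc (0:ℝ) 1,
      |(∫ x : ℝ, u x (x / ε)) - ∫ x : ℝ, ∫ ξ in (0:ℝ)..1, u x ξ| ≤ C * ε ^ n := by
  intro n _hn
  have hu : ContDiff ℝ ∞ (fun p : ℝ × ℝ => u p.1 p.2) := hsmooth.of_le (by simp)
  set um : ℝ → ℝ := fun x => ∫ ξ in (0:ℝ)..1, u x ξ with humdef
  have hum_smooth : ContDiff ℝ ∞ um := aux_param_smooth' (E := ℝ) u hu
  set v : ℝ → ℝ → ℝ := fun x ξ => u x ξ - um x with hvdef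
  have hv_smooth : ContDiff ℝ ∞ (fun p : ℝ × ℝ => v p.1 p.2) :=
    hu.sub (hum_smooth.comp contDiff_fst)
  have hum_supp : ∀ x, x ∉ Set.Icc x₀ x₁ → um x = 0 := fun x hx => by
    show (∫ ξ in (0:ℝ)..1, u x ξ) = 0
    simp [show ∀ ξ, u x ξ = 0 from fun ξ => hsupp ξ x hx]
  have hv_per : ∀ x ξ, v x (ξ + 1) = v x ξ := fun x ξ => by
    show u x (ξ + 1) - um x = u x ξ - um x
    rw [hper]
  have hv_supp : ∀ ξ x, x ∉ Set.Icc x₀ x₁ → v x ξ = 0 := fun ξ x hx => by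
    show u x ξ - um x = 0
    rw [hsupp ξ x hx, hum_supp x hx, sub_zero]
  have hv_mean : ∀ x, (∫ ξ in (0:ℝ)..1, v x ξ) = 0 := by
    intro x
    have hint : IntervalIntegrable (u x) volume 0 1 :=
      (hu.continuous.comp (Continuous.prodMk_right x)).intervalIntegrable 0 1
    show (∫ ξ in (0:ℝ)..1, (u x ξ - um x)) = 0
    rw [intervalIntegral.integral_sub hint intervalIntegrable_const,
      intervalIntegral.integral_const]
    show um x - (1 - 0) • um x = 0
    simp
  obtain ⟨C, hC0, hC⟩ := key_lemma n v x₀ x₁ hv_smooth hv_per hv_supp hv_mean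
  refine ⟨C, hC0, fun ε hε => ?_⟩
  have hu_int : Integrable fun x : ℝ => u x (x / ε) :=
    integrable_of_supp (cont_diag' hu.continuous ε) (fun x hx => hsupp _ x hx)
  have hum_int : Integrable um := integrable_of_supp hum_smooth.continuous hum_supp
  have hsplit : (∫ x : ℝ, v x (x / ε)) = (∫ x : ℝ, u x (x / ε)) - ∫ x : ℝ, um x := by
    rw [← integral_sub hu_int hum_int]
  have hfin := hC ε hε
  rw [hsplit] at hfin
  exact hfin
end

section
/- Let g : ℝ → ℝ be continuous with compact support. Then the function F(x) = ∫_ℝ |x − t| g(t) dt is twice differentiable and F''(x) = 2 g(x) for all x. -/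
open MeasureTheory

theorem stmt_10 (g : ℝ → ℝ) (hg : Continuous g) (hsupp : HasCompactSupport g) :
    (∀ x, DifferentiableAt ℝ (fun y => ∫ t : ℝ, |y - t| * g t) x) ∧
    (∀ x, DifferentiableAt ℝ (deriv (fun y => ∫ t : ℝ, |y - t| * g t)) x) ∧
    (∀ x, deriv (deriv (fun y => ∫ t : ℝ, |y - t| * g t)) x = 2 * g x) := by
  have hgint : Integrable g := hg.integrable_of_hasCompactSupport hsupp
  have hptg : Continuous (fun t : ℝ => t * g t) := continuous_id.mul hg
  have hpts : HasCompactSupport (fun t : ℝ => t * g t) := hsupp.mul_left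
  have hptint : Integrable (fun t : ℝ => t * g t) :=
    hptg.integrable_of_hasCompactSupport hpts
  set A : ℝ → ℝ := fun x => ∫ t in Set.Iic x, g t with hAdef
  set B : ℝ → ℝ := fun x => ∫ t in Set.Iic x, t * g t with hBdef
  set C : ℝ := ∫ t, g t with hCdef
  set D : ℝ := ∫ t, t * g t with hDdef
  -- derivative of A and B via FTC
  have hAderiv : ∀ x, HasDerivAt A (g x) x := by
    intro x
    have heq : A = fun y => (∫ t in (0:ℝ)..y, g t) + A 0 := by
      funext y
      have := intervalIntegral.integral_Iic_sub_Iic hgint.integrableOn hgint.integrableOn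
        (a := 0) (b := y)
      simp only [hAdef]
      linarith [this]
    rw [heq]
    exact ((intervalIntegral.integral_hasDerivAt_right (hg.intervalIntegrable 0 x)
      (hg.stronglyMeasurableAtFilter _ _) hg.continuousAt)).add_const _
  have hBderiv : ∀ x, HasDerivAt B (x * g x) x := by
    intro x
    have heq : B = fun y => (∫ t in (0:ℝ)..y, t * g t) + B 0 := by
      funext y
      have := intervalIntegral.integral_Iic_sub_Iic hptint.integrableOn hptint.integrableOn
        (a := 0) (b := y)
      simp only [hBdef]
      linarith [this]
    rw [heq]
    exact ((intervalIntegral.integral_hasDerivAt_right (hptg.intervalIntegrable 0 x)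
      (hptg.stronglyMeasurableAtFilter _ _) hptg.continuousAt)).add_const _
  -- key pointwise formula for F
  have habs : ∀ a : ℝ, |a| = 2 * max a 0 - a := by
    intro a
    rcases le_total a 0 with h | h
    · rw [abs_of_nonpos h, max_eq_right h]; ring
    · rw [abs_of_nonneg h, max_eq_left h]; ring
  have hF : ∀ y : ℝ, (∫ t : ℝ, |y - t| * g t) = 2 * (y * A y - B y) - (y * C - D) := by
    intro y
    have hmax : Integrable (fun t : ℝ => max (y - t) 0 * g t) :=
      (((continuous_const.sub continuous_id).max continuous_const).mul hg).integrable_of_hasCompactSupport hsupp.mul_left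
    have hlin : Integrable (fun t : ℝ => (y - t) * g t) :=
      ((continuous_const.sub continuous_id).mul hg).integrable_of_hasCompactSupport hsupp.mul_left
    have step1 : (∫ t : ℝ, |y - t| * g t)
        = ∫ t : ℝ, (2 * (max (y - t) 0 * g t) - (y - t) * g t) := by
      congr 1; funext t; rw [habs (y - t)]; ring
    have step2 : (∫ t : ℝ, (2 * (max (y - t) 0 * g t) - (y - t) * g t))
        = 2 * (∫ t : ℝ, max (y - t) 0 * g t) - ∫ t : ℝ, (y - t) * g t := by
      rw [integral_sub (hmax.const_mul 2) hlin, integral_const_mul]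
    have step3 : (∫ t : ℝ, max (y - t) 0 * g t) = y * A y - B y := by
      have h1 : (∫ t : ℝ, max (y - t) 0 * g t)
          = ∫ t in Set.Iic y, max (y - t) 0 * g t := by
        refine (setIntegral_eq_integral_of_forall_compl_eq_zero ?_).symm
        intro t ht
        simp only [Set.mem_Iic, not_le] at ht
        rw [max_eq_right (by linarith), zero_mul]
      have h2 : (∫ t in Set.Iic y, max (y - t) 0 * g t)
          = ∫ t in Set.Iic y, (y * g t - t * g t) := by
        refine setIntegral_congr_fun measurableSet_Iic ?_
        intro t ht
        simp only [Set.mem_Iic] at ht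
        dsimp only
        rw [max_eq_left (by linarith : (0:ℝ) ≤ y - t)]; ring
      rw [h1, h2, integral_sub ((hgint.const_mul y).integrableOn) hptint.integrableOn,
        integral_const_mul]
    have step4 : (∫ t : ℝ, (y - t) * g t) = y * C - D := by
      have h2 : (∫ t : ℝ, (y - t) * g t) = ∫ t : ℝ, (y * g t - t * g t) := by
        congr 1; funext t; ring
      rw [h2, integral_sub (hgint.const_mul y) hptint, integral_const_mul]
    rw [step1, step2, step3, step4]
  have hFfun : (fun y => ∫ t : ℝ, |y - t| * g t)
      = fun y => 2 * (y * A y - B y) - (y * C - D) := funext hF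
  -- first derivative
  have hF1 : ∀ x, HasDerivAt (fun y => ∫ t : ℝ, |y - t| * g t) (2 * A x - C) x := by
    intro x
    rw [hFfun]
    have h : HasDerivAt (fun y => 2 * (y * A y - B y) - (y * C - D))
        (2 * ((1 * A x + x * g x) - x * g x) - (1 * C)) x := by
      exact ((((hasDerivAt_id x).mul (hAderiv x)).sub (hBderiv x)).const_mul 2).sub
        (((hasDerivAt_id x).mul_const C).sub_const D)
    convert h using 1; ring
  have hderivF : deriv (fun y => ∫ t : ℝ, |y - t| * g t) = fun x => 2 * A x - C :=
    funext fun x => (hF1 x).deriv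
  have hF2 : ∀ x, HasDerivAt (fun x => 2 * A x - C) (2 * g x) x := fun x =>
    ((hAderiv x).const_mul 2).sub_const C
  refine ⟨fun x => (hF1 x).differentiableAt, ?_, ?_⟩
  · intro x; rw [hderivF]; exact (hF2 x).differentiableAt
  · intro x; rw [hderivF]; exact (hF2 x).deriv
end

section
/- Let f : ℝ → ℝ be continuous with support in [x₀,x₁]. Then ∫_{x₀}^{x₁} f(x) (∫_{x₀}^x (x−t) f(t) dt) dx = − ∫_{x₀}^{x₁} (∫_{x₀}^x f(t) dt)² dx + (∫_ℝ (x₁ − x) f(x) dx)(∫_ℝ f(x) dx). -/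
/-!
Put `F x = ∫_{x₀}^x f` and `G x = ∫_{x₀}^x (x - t) f t dt = x F x - ∫_{x₀}^x t f t dt`, so that
`F' = f` and `G' = F`. Integrating `G f = G F'` by parts gives
`∫_{x₀}^{x₁} G f = G x₁ F x₁ - ∫_{x₀}^{x₁} F²`, and since `f` vanishes outside `[x₀, x₁]`, the
boundary values `F x₁` and `G x₁` are the integrals of `f` and `(x₁ - x) f x` over all of `ℝ`.
-/

open MeasureTheory intervalIntegral Set

lemma intervalIntegral_eq_integral_of_forall_notMem_Icc {E : Type*} [NormedAddCommGroup E]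
    [NormedSpace ℝ E] {g : ℝ → E} {a b : ℝ} (hg : ∀ x, x ∉ Icc a b → g x = 0) :
    ∫ x in a..b, g x = ∫ x, g x := by
  rcases le_or_gt a b with hab | hba
  · rw [integral_of_le hab, ← integral_Icc_eq_integral_Ioc,
      setIntegral_eq_integral_of_forall_compl_eq_zero hg]
  · have : g = 0 := funext fun x => hg x (by simp [Icc_eq_empty_of_lt hba])
    simp [this]

lemma integral_sub_mul_eq {f : ℝ → ℝ} (hf : Continuous f) (a x : ℝ) :
    ∫ t in a..x, (x - t) * f t = x * (∫ t in a..x, f t) - ∫ t in a..x, t * f t := by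
  simp_rw [sub_mul]
  rw [integral_sub (f := fun t => x * f t) (g := fun t => t * f t)
    ((continuous_const.mul hf).intervalIntegrable _ _)
    ((continuous_id.mul hf).intervalIntegrable _ _), intervalIntegral.integral_const_mul]

lemma hasDerivAt_integral_sub_mul {f : ℝ → ℝ} (hf : Continuous f) (a x : ℝ) :
    HasDerivAt (fun y => ∫ t in a..y, (y - t) * f t) (∫ t in a..x, f t) x := by
  have hF := (hf.integral_hasStrictDerivAt a x).hasDerivAt
  have hg : Continuous fun t => t * f t := continuous_id.mul hf
  have hH := (hg.integral_hasStrictDerivAt a x).hasDerivAt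
  simp_rw [integral_sub_mul_eq hf a]
  exact (((hasDerivAt_id' x).fun_mul hF).fun_sub hH).congr_deriv (by ring)

lemma integral_mul_integral_sub_mul_eq {f : ℝ → ℝ} (hf : Continuous f) (a b : ℝ) :
    ∫ x in a..b, f x * ∫ t in a..x, (x - t) * f t
      = (∫ t in a..b, (b - t) * f t) * (∫ t in a..b, f t)
        - ∫ x in a..b, (∫ t in a..x, f t) ^ 2 := by
  have hF : Continuous fun x => ∫ t in a..x, f t :=
    continuous_primitive (fun _ _ => hf.intervalIntegrable _ _) a
  have parts := integral_mul_deriv_eq_deriv_mul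
    (fun x _ => hasDerivAt_integral_sub_mul hf a x)
    (fun x _ => (hf.integral_hasStrictDerivAt a x).hasDerivAt)
    (hF.intervalIntegrable a b) (hf.intervalIntegrable a b)
  simp only [integral_same, zero_mul, sub_zero] at parts
  simp_rw [mul_comm (f _), sq, parts]

theorem stmt_12 (f : ℝ → ℝ) (x₀ x₁ : ℝ) (hf : Continuous f)
    (hsupp : ∀ x, x ∉ Set.Icc x₀ x₁ → f x = 0) :
    (∫ x in x₀..x₁, f x * ∫ t in x₀..x, (x - t) * f t)
    = -(∫ x in x₀..x₁, (∫ t in x₀..x, f t) ^ 2)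
      + (∫ x : ℝ, (x₁ - x) * f x) * (∫ x : ℝ, f x) := by
  rw [integral_mul_integral_sub_mul_eq hf,
    intervalIntegral_eq_integral_of_forall_notMem_Icc hsupp,
    intervalIntegral_eq_integral_of_forall_notMem_Icc fun x hx => by rw [hsupp x hx, mul_zero]]
  ring
end

section
/- Let V : ℝ × ℝ → ℝ be smooth, 1-periodic in the second variable, with supp V(·,ξ) ⊆ [x₀,x₁] and zero ξ-mean, and let v be the associated second ξ-antiderivative with zero ξ-mean. Define k₂ = (1/2)∫_ℝ ∫₀¹ (∂v/∂ξ(x,ξ))² dξ dx. Then there exists C such that for all ε ∈ (0,1], |(−ε²/2) ∫_ℝ V(x, x/ε) v(x, x/ε) dx − ε² k₂| ≤ C ε³. -/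
open MeasureTheory intervalIntegral

private lemma per_fract {f : ℝ → ℝ} (hf : ∀ t, f (t + 1) = f t) (ξ : ℝ) :
    f (Int.fract ξ) = f ξ := by
  have hp : Function.Periodic f 1 := hf
  have h := hp.sub_int_mul_eq (x := ξ) ⌊ξ⌋
  rw [mul_one, Int.self_sub_floor] at h
  exact h

private lemma lipschitz_aux (f : ℝ × ℝ → ℝ) (hf : ContDiff ℝ (⊤ : ℕ∞) f) (S : Set (ℝ × ℝ))
    (hS : Convex ℝ S) (hSc : IsCompact S) :
    ∃ L : ℝ, 0 ≤ L ∧ ∀ p ∈ S, ∀ q ∈ S, |f p - f q| ≤ L * ‖p - q‖ := by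
  obtain ⟨C, hC⟩ := hSc.exists_bound_of_continuousOn
    ((hf.continuous_fderiv (by simp)).continuousOn)
  refine ⟨max C 0, le_max_right _ _, fun p hp q hq => ?_⟩
  have := hS.norm_image_sub_le_of_norm_fderiv_le
    (f := f) (C := max C 0)
    (fun x _ => (hf.differentiable (by simp)).differentiableAt)
    (fun x hx => (hC x hx).trans (le_max_left _ _)) hq hp
  simpa [Real.norm_eq_abs] using this

private lemma avg (g : ℝ × ℝ → ℝ) (a b : ℝ) (hab : a ≤ b)
    (hgc : Continuous g)
    (hsupp : ∀ x ξ, x ∉ Set.Icc a b → g (x, ξ) = 0)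
    (hmean : ∀ x, ∫ ξ in (0:ℝ)..1, g (x, ξ) = 0)
    (hper : ∀ x ξ, g (x, ξ + 1) = g (x, ξ))
    (L : ℝ) (hL0 : 0 ≤ L)
    (hLip : ∀ x y ξ, x ∈ Set.Icc (a-2) (b+3) → y ∈ Set.Icc (a-2) (b+3) →
      |g (x, ξ) - g (y, ξ)| ≤ L * |x - y|) :
    ∀ ε ∈ Set.Ioc (0:ℝ) 1, |∫ x : ℝ, g (x, x / ε)| ≤ (L * (b - a + 3)) * ε := by
  rintro ε ⟨hε0, hε1⟩
  have hεne : ε ≠ 0 := ne_of_gt hε0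
  set n : ℕ := ⌈(b - a + 2) / ε⌉₊ with hn
  set c : ℕ → ℝ := fun k => ((⌊a / ε⌋ - 1 : ℤ) + (k : ℝ)) * ε with hc
  have hckf : ∀ k : ℕ, c k = c 0 + k * ε := by
    intro k; simp only [hc]; push_cast; ring
  have hfl1 : (⌊a / ε⌋ : ℝ) ≤ a / ε := Int.floor_le _
  have hfl2 : a / ε - 1 < (⌊a / ε⌋ : ℝ) := Int.sub_one_lt_floor _
  have hdiv : (a / ε) * ε = a := div_mul_cancel₀ a hεne
  have hc0a : c 0 < a := by
    have : c 0 = ((⌊a / ε⌋ : ℝ) - 1) * ε := by simp [hc]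
    nlinarith
  have hc0low : a - 2 ≤ c 0 := by
    have : c 0 = ((⌊a / ε⌋ : ℝ) - 1) * ε := by simp [hc]
    nlinarith
  have hnge : (b - a + 2) ≤ n * ε := by
    have h1 : (b - a + 2) / ε ≤ (n : ℝ) := Nat.le_ceil _
    calc b - a + 2 = ((b - a + 2) / ε) * ε := by field_simp
    _ ≤ n * ε := by nlinarith
  have hnle : (n : ℝ) * ε ≤ b - a + 3 := by
    have h0 : (0:ℝ) ≤ (b - a + 2) / ε := div_nonneg (by linarith) hε0.le
    have h1 : (n : ℝ) < (b - a + 2) / ε + 1 := Nat.ceil_lt_add_one h0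
    have := div_mul_cancel₀ (b - a + 2) hεne
    nlinarith
  have hcnb : b ≤ c n := by rw [hckf n]; nlinarith
  have hcnhigh : c n ≤ b + 3 := by rw [hckf n]; nlinarith
  have hcmono : ∀ k l : ℕ, k ≤ l → c k ≤ c l := by
    intro k l hkl
    rw [hckf k, hckf l]
    have : (k:ℝ) ≤ l := by exact_mod_cast hkl
    nlinarith
  have hcmem : ∀ k ≤ n, c k ∈ Set.Icc (a-2) (b+3) := by
    intro k hk
    exact ⟨hc0low.trans (hcmono 0 k (Nat.zero_le _)), (hcmono k n hk).trans hcnhigh⟩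
  have hfc : Continuous fun x => g (x, x / ε) :=
    hgc.comp (continuous_id.prodMk (continuous_id.div_const ε))
  have h1 : ∫ x : ℝ, g (x, x / ε) = ∫ x in (c 0)..(c n), g (x, x / ε) := by
    rw [intervalIntegral.integral_of_le (le_trans hc0a.le (hab.trans hcnb))]
    refine (setIntegral_eq_integral_of_forall_compl_eq_zero ?_).symm
    intro x hx
    apply hsupp
    intro hxab
    rcases hxab with ⟨hxa, hxb⟩
    apply hx
    exact ⟨lt_of_lt_of_le hc0a hxa, hxb.trans hcnb⟩
  have h2 : ∫ x in (c 0)..(c n), g (x, x / ε)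
      = ∑ k ∈ Finset.range n, ∫ x in (c k)..(c (k+1)), g (x, x / ε) :=
    (intervalIntegral.sum_integral_adjacent_intervals
      (fun k _ => (hfc.intervalIntegrable _ _))).symm
  have h3 : ∀ k < n, |∫ x in (c k)..(c (k+1)), g (x, x / ε)| ≤ L * ε * ε := by
    intro k hk
    have hgk : Continuous fun x : ℝ => g (c k, x / ε) :=
      hgc.comp (continuous_const.prodMk (continuous_id.div_const ε))
    have hzero : ∫ x in (c k)..(c (k+1)), g (c k, x / ε) = 0 := by
      rw [intervalIntegral.integral_comp_div (f := fun u => g (c k, u)) hεne]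
      have e1 : c k / ε = ((⌊a / ε⌋ - 1 : ℤ) + (k : ℝ)) := by
        rw [hc]; field_simp
      have e2 : c (k+1) / ε = ((⌊a / ε⌋ - 1 : ℤ) + (k : ℝ)) + 1 := by
        rw [hc]; push_cast; field_simp; ring
      have hper' : Function.Periodic (fun u => g (c k, u)) 1 := fun u => hper _ u
      rw [e1, e2, hper'.intervalIntegral_add_eq _ 0, zero_add, hmean (c k), smul_zero]
    have hsplit : ∫ x in (c k)..(c (k+1)), g (x, x / ε)
        = ∫ x in (c k)..(c (k+1)), (g (x, x / ε) - g (c k, x / ε)) := by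
      rw [intervalIntegral.integral_sub (hfc.intervalIntegrable _ _)
        (hgk.intervalIntegrable _ _), hzero, sub_zero]
    rw [hsplit]
    have hck1 : c k ≤ c (k+1) := hcmono k (k+1) (Nat.le_succ _)
    have hbound : ∀ x ∈ Set.uIoc (c k) (c (k+1)),
        ‖g (x, x / ε) - g (c k, x / ε)‖ ≤ L * ε := by
      intro x hx
      rw [Set.uIoc_of_le hck1] at hx
      have hxmem : x ∈ Set.Icc (a-2) (b+3) := by
        constructor
        · exact (hcmem k (Nat.le_of_lt hk)).1.trans hx.1.le
        · exact hx.2.trans (hcmem (k+1) hk).2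
      have hlip := hLip x (c k) (x / ε) hxmem (hcmem k (Nat.le_of_lt hk))
      rw [Real.norm_eq_abs]
      refine hlip.trans ?_
      have hckeq : c (k+1) = c k + ε := by rw [hckf (k+1), hckf k]; push_cast; ring
      have hxck : |x - c k| ≤ ε := by
        rw [abs_of_nonneg (by linarith [hx.1.le] : (0:ℝ) ≤ x - c k)]
        have := hx.2
        rw [hckeq] at this
        linarith
      exact mul_le_mul_of_nonneg_left hxck hL0
    have hnorm := intervalIntegral.norm_integral_le_of_norm_le_const hbound
    rw [Real.norm_eq_abs] at hnorm
    refine hnorm.trans ?_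
    have hd : |c (k+1) - c k| = ε := by
      rw [hckf (k+1), hckf k]
      have he : c 0 + (↑(k+1) : ℝ) * ε - (c 0 + (↑k : ℝ) * ε) = ε := by push_cast; ring
      rw [he, abs_of_pos hε0]
    rw [hd]
  rw [h1, h2]
  calc |∑ k ∈ Finset.range n, ∫ x in (c k)..(c (k+1)), g (x, x / ε)|
      ≤ ∑ k ∈ Finset.range n, |∫ x in (c k)..(c (k+1)), g (x, x / ε)| :=
        Finset.abs_sum_le_sum_abs _ _
    _ ≤ ∑ _k ∈ Finset.range n, L * ε * ε := by
        apply Finset.sum_le_sum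
        intro k hk
        exact h3 k (Finset.mem_range.mp hk)
    _ = (n : ℝ) * (L * ε * ε) := by rw [Finset.sum_const, Finset.card_range]; simp [mul_comm]
    _ ≤ (L * (b - a + 3)) * ε := by
        nlinarith [mul_le_mul_of_nonneg_right hnle (mul_nonneg hL0 hε0.le)]

theorem stmt_14 (V v : ℝ → ℝ → ℝ) (x₀ x₁ : ℝ)
    (hVsmooth : ContDiff ℝ (⊤ : ℕ∞) (fun p : ℝ × ℝ => V p.1 p.2))
    (hVper : ∀ x ξ, V x (ξ + 1) = V x ξ)
    (hVsupp : ∀ ξ x, x ∉ Set.Icc x₀ x₁ → V x ξ = 0)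
    (hVmean : ∀ x, ∫ ξ in (0:ℝ)..1, V x ξ = 0)
    (hvsmooth : ContDiff ℝ (⊤ : ℕ∞) (fun p : ℝ × ℝ => v p.1 p.2))
    (hvper : ∀ x ξ, v x (ξ + 1) = v x ξ)
    (hvsupp : ∀ ξ x, x ∉ Set.Icc x₀ x₁ → v x ξ = 0)
    (hv'' : ∀ x ξ, deriv (fun ζ => deriv (v x) ζ) ξ = V x ξ)
    (hvmean : ∀ x, ∫ ξ in (0:ℝ)..1, v x ξ = 0) :
    ∃ C : ℝ, ∀ ε ∈ Set.Ioc (0:ℝ) 1,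
      |(-(ε ^ 2) / 2) * (∫ x : ℝ, V x (x / ε) * v x (x / ε))
        - ε ^ 2 * ((1/2) * ∫ x : ℝ, ∫ ξ in (0:ℝ)..1, (deriv (v x) ξ) ^ 2)|
      ≤ C * ε ^ 3 := by
  set b := max x₁ x₀ with hbdef
  have hab : x₀ ≤ b := le_max_right _ _
  have hVs : ∀ ξ x, x ∉ Set.Icc x₀ b → V x ξ = 0 := fun ξ x hx =>
    hVsupp ξ x fun h => hx (Set.Icc_subset_Icc_right (le_max_left _ _) h)
  have hvs : ∀ ξ x, x ∉ Set.Icc x₀ b → v x ξ = 0 := fun ξ x hx =>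
    hvsupp ξ x fun h => hx (Set.Icc_subset_Icc_right (le_max_left _ _) h)
  -- the ξ-derivative as a smooth two-variable function
  have hWex : ∃ W : ℝ × ℝ → ℝ, ContDiff ℝ (⊤ : ℕ∞) W ∧ ∀ x ξ, deriv (v x) ξ = W (x, ξ) := by
    refine ⟨fun p => fderiv ℝ (fun q : ℝ × ℝ => v q.1 q.2) p (0, 1),
      (hvsmooth.fderiv_right (by simp)).clm_apply contDiff_const, fun x ξ => ?_⟩
    have h1 : HasDerivAt (fun t : ℝ => ((x, t) : ℝ × ℝ)) ((0:ℝ), (1:ℝ)) ξ :=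
      (hasDerivAt_const ξ x).prodMk (hasDerivAt_id ξ)
    have h2 : HasFDerivAt (fun q : ℝ × ℝ => v q.1 q.2)
        (fderiv ℝ (fun q : ℝ × ℝ => v q.1 q.2) (x, ξ)) (x, ξ) :=
      (hvsmooth.differentiable (by simp) (x, ξ)).hasFDerivAt
    exact (h2.comp_hasDerivAt ξ h1).deriv
  obtain ⟨W, hWsm, hW⟩ := hWex
  have hucont : ∀ x, Continuous (deriv (v x)) := by
    intro x
    have h : deriv (v x) = fun ξ => W (x, ξ) := funext fun ξ => hW x ξ
    rw [h]
    exact hWsm.continuous.comp (continuous_const.prodMk continuous_id)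
  have huderiv : ∀ x ξ, HasDerivAt (deriv (v x)) (V x ξ) ξ := by
    intro x ξ
    have heq : deriv (v x) = fun ξ => W (x, ξ) := funext fun ξ => hW x ξ
    have hWx : ContDiff ℝ (⊤ : ℕ∞) (fun ξ => W (x, ξ)) :=
      hWsm.comp (contDiff_const.prodMk contDiff_id)
    have hdiff : DifferentiableAt ℝ (deriv (v x)) ξ := by
      rw [heq]; exact (hWx.differentiable (by simp)).differentiableAt
    have h := hdiff.hasDerivAt
    rwa [hv'' x ξ] at h
  have hvd : ∀ x ξ, HasDerivAt (v x) (deriv (v x) ξ) ξ := by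
    intro x ξ
    have hvx : ContDiff ℝ (⊤ : ℕ∞) (v x) :=
      hvsmooth.comp (contDiff_const.prodMk contDiff_id)
    exact ((hvx.differentiable (by simp)).differentiableAt).hasDerivAt
  -- integration by parts in ξ over the period
  have hzeroMean : ∀ x, ∫ ξ in (0:ℝ)..1, (V x ξ * v x ξ + (deriv (v x) ξ)^2) = 0 := by
    intro x
    have hP : ∀ ξ ∈ Set.uIcc (0:ℝ) 1, HasDerivAt (fun t => deriv (v x) t * v x t)
        (V x ξ * v x ξ + (deriv (v x) ξ)^2) ξ := by
      intro ξ _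
      have h : HasDerivAt (fun t => deriv (v x) t * v x t)
          (V x ξ * v x ξ + deriv (v x) ξ * deriv (v x) ξ) ξ := (huderiv x ξ).mul (hvd x ξ)
      convert h using 1
      ring
    have c1 : Continuous fun ξ => V x ξ :=
      hVsmooth.continuous.comp (continuous_const.prodMk continuous_id)
    have c2 : Continuous fun ξ => v x ξ :=
      hvsmooth.continuous.comp (continuous_const.prodMk continuous_id)
    have hcont : Continuous fun ξ => V x ξ * v x ξ + (deriv (v x) ξ)^2 :=
      (c1.mul c2).add ((hucont x).pow 2)
    rw [intervalIntegral.integral_eq_sub_of_hasDerivAt hP (hcont.intervalIntegrable 0 1)]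
    have hper1 : deriv (v x) 1 = deriv (v x) 0 := by
      have hpv : (fun t => v x (t + 1)) = v x := funext fun t => hvper x t
      have h := deriv_comp_add_const (v x) 1 0
      rw [hpv] at h
      simpa using h.symm
    have hper2 : v x 1 = v x 0 := by simpa using hvper x 0
    rw [hper1, hper2]
    ring
  -- integrability of the ξ-slices
  have hVvInt : ∀ x, IntervalIntegrable (fun ξ => V x ξ * v x ξ) volume 0 1 := by
    intro x
    have c1 : Continuous fun ξ => V x ξ :=
      hVsmooth.continuous.comp (continuous_const.prodMk continuous_id)
    have c2 : Continuous fun ξ => v x ξ :=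
      hvsmooth.continuous.comp (continuous_const.prodMk continuous_id)
    exact (c1.mul c2).intervalIntegrable 0 1
  have hu2Int : ∀ x, IntervalIntegrable (fun ξ => (deriv (v x) ξ)^2) volume 0 1 :=
    fun x => ((hucont x).pow 2).intervalIntegrable 0 1
  have hVvMean : ∀ x, ∫ ξ in (0:ℝ)..1, V x ξ * v x ξ
      = - ∫ ξ in (0:ℝ)..1, (deriv (v x) ξ)^2 := by
    intro x
    have h := hzeroMean x
    rw [intervalIntegral.integral_add (hVvInt x) (hu2Int x)] at h
    linarith
  -- the mean function m
  have hmW : ∀ x : ℝ, (∫ ξ in (0:ℝ)..1, (deriv (v x) ξ)^2)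
      = ∫ ξ in (0:ℝ)..1, (W (x, ξ))^2 := fun x =>
    intervalIntegral.integral_congr (fun ξ _ => by rw [hW])
  have hmcont : Continuous fun x : ℝ => ∫ ξ in (0:ℝ)..1, (deriv (v x) ξ)^2 := by
    have heq : (fun x : ℝ => ∫ ξ in (0:ℝ)..1, (deriv (v x) ξ)^2)
        = fun x : ℝ => ∫ ξ in (0:ℝ)..1, (W (x, ξ))^2 := funext fun x => hmW x
    rw [heq]
    exact intervalIntegral.continuous_parametric_intervalIntegral_of_continuous'
      (f := fun x t => (W (x, t))^2) (by show Continuous fun p : ℝ × ℝ => W (p.1, p.2) ^ 2; have := hWsm.continuous; fun_prop) 0 1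
  have hmzero : ∀ x, x ∉ Set.Icc x₀ b → (∫ ξ in (0:ℝ)..1, (deriv (v x) ξ)^2) = 0 := by
    intro x hx
    have hvx0 : v x = fun _ => (0:ℝ) := funext fun ξ => hvs ξ x hx
    rw [hvx0]
    simp
  -- Lipschitz bounds on the compact box
  have hSconv : Convex ℝ ((Set.Icc (x₀-2) (b+3)) ×ˢ (Set.Icc (0:ℝ) 1)) :=
    (convex_Icc _ _).prod (convex_Icc _ _)
  have hScomp : IsCompact ((Set.Icc (x₀-2) (b+3)) ×ˢ (Set.Icc (0:ℝ) 1)) :=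
    isCompact_Icc.prod isCompact_Icc
  obtain ⟨L₁, hL₁0, hL₁⟩ := lipschitz_aux (fun p => V p.1 p.2 * v p.1 p.2)
    (hVsmooth.mul hvsmooth) _ hSconv hScomp
  obtain ⟨L₂, hL₂0, hL₂⟩ := lipschitz_aux (fun p => (W p)^2)
    (hWsm.pow 2) _ hSconv hScomp
  have hprodnorm : ∀ x y t : ℝ, ‖((x, t) : ℝ × ℝ) - (y, t)‖ = |x - y| := by
    intro x y t
    have : ((x, t) : ℝ × ℝ) - (y, t) = (x - y, 0) := by simp [Prod.mk_sub_mk]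
    rw [this, Prod.norm_def]
    simp [Real.norm_eq_abs]
  -- slice Lipschitz bound for G
  have hGLip : ∀ x y ξ, x ∈ Set.Icc (x₀-2) (b+3) → y ∈ Set.Icc (x₀-2) (b+3) →
      |(V x ξ * v x ξ + ∫ t in (0:ℝ)..1, (deriv (v x) t)^2)
        - (V y ξ * v y ξ + ∫ t in (0:ℝ)..1, (deriv (v y) t)^2)|
      ≤ (L₁ + L₂) * |x - y| := by
    intro x y ξ hx hy
    have hξ' : Int.fract ξ ∈ Set.Icc (0:ℝ) 1 :=
      ⟨Int.fract_nonneg ξ, (Int.fract_lt_one ξ).le⟩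
    have hVvx : V x (Int.fract ξ) * v x (Int.fract ξ) = V x ξ * v x ξ :=
      per_fract (f := fun t => V x t * v x t) (fun t => by rw [hVper, hvper]) ξ
    have hVvy : V y (Int.fract ξ) * v y (Int.fract ξ) = V y ξ * v y ξ :=
      per_fract (f := fun t => V y t * v y t) (fun t => by rw [hVper, hvper]) ξ
    have hpart1 : |V x ξ * v x ξ - V y ξ * v y ξ| ≤ L₁ * |x - y| := by
      rw [← hVvx, ← hVvy]
      have h := hL₁ (x, Int.fract ξ) (Set.mk_mem_prod hx hξ')
        (y, Int.fract ξ) (Set.mk_mem_prod hy hξ')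
      rwa [hprodnorm] at h
    have hpart2 : |(∫ t in (0:ℝ)..1, (deriv (v x) t)^2)
        - (∫ t in (0:ℝ)..1, (deriv (v y) t)^2)| ≤ L₂ * |x - y| := by
      rw [hmW x, hmW y]
      have hWint : ∀ z : ℝ, IntervalIntegrable (fun t => (W (z, t))^2) volume 0 1 :=
        fun z => (((hWsm.continuous.comp (continuous_const.prodMk continuous_id)).pow 2)
          ).intervalIntegrable 0 1
      rw [← intervalIntegral.integral_sub (hWint x) (hWint y)]
      have hbd : ∀ t ∈ Set.uIoc (0:ℝ) 1,
          ‖(W (x, t))^2 - (W (y, t))^2‖ ≤ L₂ * |x - y| := by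
        intro t ht
        rw [Set.uIoc_of_le (zero_le_one)] at ht
        have htm : t ∈ Set.Icc (0:ℝ) 1 := ⟨ht.1.le, ht.2⟩
        have h := hL₂ (x, t) (Set.mk_mem_prod hx htm) (y, t) (Set.mk_mem_prod hy htm)
        rw [hprodnorm] at h
        rw [Real.norm_eq_abs]
        exact h
      have h := intervalIntegral.norm_integral_le_of_norm_le_const hbd
      rw [Real.norm_eq_abs] at h
      simpa using h
    calc |(V x ξ * v x ξ + ∫ t in (0:ℝ)..1, (deriv (v x) t)^2)
          - (V y ξ * v y ξ + ∫ t in (0:ℝ)..1, (deriv (v y) t)^2)|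
        = |(V x ξ * v x ξ - V y ξ * v y ξ)
          + ((∫ t in (0:ℝ)..1, (deriv (v x) t)^2)
            - (∫ t in (0:ℝ)..1, (deriv (v y) t)^2))| := by ring_nf
      _ ≤ |V x ξ * v x ξ - V y ξ * v y ξ|
          + |(∫ t in (0:ℝ)..1, (deriv (v x) t)^2)
            - (∫ t in (0:ℝ)..1, (deriv (v y) t)^2)| := abs_add_le _ _
      _ ≤ L₁ * |x - y| + L₂ * |x - y| := add_le_add hpart1 hpart2
      _ = (L₁ + L₂) * |x - y| := by ring
  -- assemble G and apply the averaging lemma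
  have hGcont : Continuous fun p : ℝ × ℝ =>
      V p.1 p.2 * v p.1 p.2 + ∫ t in (0:ℝ)..1, (deriv (v p.1) t)^2 :=
    (hVsmooth.continuous.mul hvsmooth.continuous).add (hmcont.comp continuous_fst)
  have hGsupp : ∀ x ξ, x ∉ Set.Icc x₀ b →
      V x ξ * v x ξ + (∫ t in (0:ℝ)..1, (deriv (v x) t)^2) = 0 := by
    intro x ξ hx
    rw [hVs ξ x hx, hmzero x hx]
    ring
  have hGmean : ∀ x, ∫ ξ in (0:ℝ)..1,
      (V x ξ * v x ξ + ∫ t in (0:ℝ)..1, (deriv (v x) t)^2) = 0 := by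
    intro x
    rw [intervalIntegral.integral_add (hVvInt x) intervalIntegrable_const, hVvMean x,
      intervalIntegral.integral_const]
    simp
  have hGper : ∀ x ξ,
      (V x (ξ+1) * v x (ξ+1) + ∫ t in (0:ℝ)..1, (deriv (v x) t)^2)
      = V x ξ * v x ξ + ∫ t in (0:ℝ)..1, (deriv (v x) t)^2 := by
    intro x ξ
    rw [hVper, hvper]
  have havg := avg (fun p : ℝ × ℝ =>
      V p.1 p.2 * v p.1 p.2 + ∫ t in (0:ℝ)..1, (deriv (v p.1) t)^2)
    x₀ b hab hGcont hGsupp hGmean hGper (L₁ + L₂) (add_nonneg hL₁0 hL₂0) hGLip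
  refine ⟨(L₁ + L₂) * (b - x₀ + 3) / 2, ?_⟩
  rintro ε ⟨hε0, hε1⟩
  have hFε_cont : Continuous fun x : ℝ => V x (x / ε) * v x (x / ε) :=
    (hVsmooth.continuous.mul hvsmooth.continuous).comp
      (continuous_id.prodMk (continuous_id.div_const ε))
  have hFε_int : Integrable fun x : ℝ => V x (x / ε) * v x (x / ε) :=
    hFε_cont.integrable_of_hasCompactSupport
      (HasCompactSupport.intro isCompact_Icc (fun x hx => by rw [hVs _ x hx, zero_mul]))
  have hm_int : Integrable fun x : ℝ => ∫ t in (0:ℝ)..1, (deriv (v x) t)^2 :=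
    hmcont.integrable_of_hasCompactSupport
      (HasCompactSupport.intro isCompact_Icc (fun x hx => hmzero x hx))
  have hsum : (∫ x : ℝ, (V x (x/ε) * v x (x/ε) + ∫ t in (0:ℝ)..1, (deriv (v x) t)^2))
      = (∫ x : ℝ, V x (x/ε) * v x (x/ε))
        + ∫ x : ℝ, ∫ t in (0:ℝ)..1, (deriv (v x) t)^2 :=
    integral_add hFε_int hm_int
  have hA := havg ε ⟨hε0, hε1⟩
  rw [hsum] at hA
  have halg : (-(ε ^ 2) / 2) * (∫ x : ℝ, V x (x / ε) * v x (x / ε))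
      - ε ^ 2 * ((1/2) * ∫ x : ℝ, ∫ ξ in (0:ℝ)..1, (deriv (v x) ξ) ^ 2)
      = (-(ε ^ 2) / 2) * ((∫ x : ℝ, V x (x / ε) * v x (x / ε))
        + ∫ x : ℝ, ∫ ξ in (0:ℝ)..1, (deriv (v x) ξ) ^ 2) := by ring
  rw [halg, abs_mul]
  have habs : |(-(ε ^ 2) / 2)| = ε^2 / 2 := by
    rw [abs_div, abs_neg, abs_of_nonneg (sq_nonneg ε)]
    norm_num
  rw [habs]
  calc ε^2/2 * |(∫ x : ℝ, V x (x / ε) * v x (x / ε))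
        + ∫ x : ℝ, ∫ ξ in (0:ℝ)..1, (deriv (v x) ξ) ^ 2|
      ≤ ε^2/2 * ((L₁ + L₂) * (b - x₀ + 3) * ε) := by
        apply mul_le_mul_of_nonneg_left _ (by positivity)
        exact hA
    _ = (L₁ + L₂) * (b - x₀ + 3) / 2 * ε ^ 3 := by ring
end

section
/- Let V : ℝ × ℝ → ℝ be smooth, 1-periodic in the second variable, with ∫₀¹ V(x,ξ) dξ = 0 for all x. Define v(x,ξ) = ∫₀^ξ (ξ−τ) V(x,τ) dτ + ξ ∫₀¹ τ V(x,τ) dτ, and let q̃_ε(x) = 1 + ε² v(x, x/ε). Then for any u ∈ C²(ℝ) the identity −(d²/dx²)(q̃_ε u) + V(x, x/ε) q̃_ε u = q̃_ε (−u'') − 2 ε² (d/dx)[v(x, x/ε)] u' − ε² [ (∂²v/∂x²)(x,x/ε) + (2/ε)(∂²v/∂x∂ξ)(x,x/ε) − V(x,x/ε) v(x,x/ε) ] u holds. -/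
open MeasureTheory intervalIntegral

open scoped ContDiff
set_option synthInstance.maxHeartbeats 1000000
set_option maxHeartbeats 1000000
set_option linter.unusedSectionVars false

section Par

variable {F : Type*} [NormedAddCommGroup F] [NormedSpace ℝ F] [CompleteSpace F]

lemma par_cont (H : (ℝ × ℝ) × ℝ → F) (hH : Continuous H) :
    Continuous (fun p : ℝ × ℝ => ∫ s in (0:ℝ)..1, H (p, s)) := by
  have heq : (fun p : ℝ × ℝ => ∫ s in (0:ℝ)..1, H (p, s))
      = fun p => ∫ s in Set.Icc (0:ℝ) 1, H (p, s) := by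
    funext p
    rw [intervalIntegral.integral_of_le zero_le_one,
      ← MeasureTheory.integral_Icc_eq_integral_Ioc]
  rw [heq]
  exact continuous_parametric_integral_of_continuous
    (f := fun (p : ℝ × ℝ) (s : ℝ) => H (p, s)) (by fun_prop) isCompact_Icc

lemma par_hasFDerivAt (H : (ℝ × ℝ) × ℝ → F) (hH : ContDiff ℝ ∞ H) (p₀ : ℝ × ℝ) :
    HasFDerivAt (fun p : ℝ × ℝ => ∫ s in (0:ℝ)..1, H (p, s))
      (∫ s in (0:ℝ)..1,
        (fderiv ℝ H (p₀, s)).comp (ContinuousLinearMap.inl ℝ (ℝ × ℝ) ℝ)) p₀ := by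
  set D : (ℝ × ℝ) × ℝ → (ℝ × ℝ) →L[ℝ] F :=
    fun q => (fderiv ℝ H q).comp (ContinuousLinearMap.inl ℝ (ℝ × ℝ) ℝ) with hD
  have hDc : Continuous D := by
    apply (hH.fderiv_right (m := ∞) (by simp)).continuous.clm_comp
      continuous_const
  obtain ⟨C, hC⟩ := ((isCompact_closedBall p₀ 1).prod (isCompact_Icc (a := (0:ℝ)) (b := 1))
    ).exists_bound_of_continuousOn hDc.continuousOn
  have hdiffH : ∀ q : (ℝ × ℝ) × ℝ, HasFDerivAt H (fderiv ℝ H q) q :=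
    fun q => ((hH.differentiable (by simp)).differentiableAt).hasFDerivAt
  refine hasFDerivAt_integral_of_dominated_of_fderiv_le (F := fun p t => H (p, t))
    (F' := fun p t => D (p, t)) (bound := fun _ => C) (s := Metric.ball p₀ 1) (Metric.ball_mem_nhds p₀ one_pos) ?_ ?_ ?_ ?_ ?_ ?_
  · filter_upwards with p
    exact (hH.continuous.comp (Continuous.prodMk continuous_const continuous_id)
      ).aestronglyMeasurable
  · exact (hH.continuous.comp (Continuous.prodMk continuous_const continuous_id)
      ).intervalIntegrable _ _
  · exact (hDc.comp (Continuous.prodMk continuous_const continuous_id)).aestronglyMeasurable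
  · filter_upwards with t ht p hp
    refine hC (p, t) ⟨Metric.ball_subset_closedBall hp, ?_⟩
    rw [Set.uIoc_of_le zero_le_one] at ht
    exact ⟨ht.1.le, ht.2⟩
  · exact intervalIntegrable_const
  · filter_upwards with t ht p hp
    exact (hdiffH (p, t)).comp p (hasFDerivAt_prodMk_left p t)

end Par

lemma par_contDiff : ∀ (n : ℕ) {F : Type*} [NormedAddCommGroup F] [NormedSpace ℝ F]
    [CompleteSpace F] (H : (ℝ × ℝ) × ℝ → F), ContDiff ℝ ∞ H →
    ContDiff ℝ n (fun p : ℝ × ℝ => ∫ s in (0:ℝ)..1, H (p, s)) := by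
  intro n
  induction n with
  | zero =>
    intro F _ _ _ H hH
    exact contDiff_zero.2 (par_cont H hH.continuous)
  | succ n ih =>
    intro F _ _ _ H hH
    have hd := fun p => par_hasFDerivAt H hH p
    rw [show ((n + 1 : ℕ) : WithTop ℕ∞) = (n : WithTop ℕ∞) + 1 by push_cast ; rfl,
      contDiff_succ_iff_fderiv]
    refine ⟨fun p => (hd p).differentiableAt, by simp, ?_⟩
    have heq : (fderiv ℝ fun p : ℝ × ℝ => ∫ s in (0:ℝ)..1, H (p, s))
        = fun p : ℝ × ℝ => ∫ s in (0:ℝ)..1,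
            (fun q : (ℝ × ℝ) × ℝ => (fderiv ℝ H q).comp
              (ContinuousLinearMap.inl ℝ (ℝ × ℝ) ℝ)) (p, s) :=
      funext fun p => (hd p).fderiv
    rw [heq]
    exact ih _ ((hH.fderiv_right (by simp)).clm_comp contDiff_const)

lemma intG_eq (G : ℝ × ℝ → ℝ) (p : ℝ × ℝ) :
    (∫ τ in (0:ℝ)..p.2, G (p.1, τ)) = ∫ s in (0:ℝ)..1, p.2 • G (p.1, s * p.2) := by
  rw [intervalIntegral.integral_smul,
    intervalIntegral.smul_integral_comp_mul_right (fun τ => G (p.1, τ)) p.2, zero_mul, one_mul]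

lemma intG_contDiff (G : ℝ × ℝ → ℝ) (hG : ContDiff ℝ ∞ G) (n : ℕ) :
    ContDiff ℝ n (fun p : ℝ × ℝ => ∫ τ in (0:ℝ)..p.2, G (p.1, τ)) := by
  have heq : (fun p : ℝ × ℝ => ∫ τ in (0:ℝ)..p.2, G (p.1, τ))
      = fun p : ℝ × ℝ => ∫ s in (0:ℝ)..1,
          (fun q : (ℝ × ℝ) × ℝ => q.1.2 • G (q.1.1, q.2 * q.1.2)) (p, s) :=
    funext fun p => intG_eq G p
  rw [heq]
  have h1 : ContDiff ℝ ∞ fun q : (ℝ × ℝ) × ℝ => G (q.1.1, q.2 * q.1.2) :=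
    hG.comp ((contDiff_fst.fst).prodMk (contDiff_snd.mul contDiff_fst.snd))
  exact par_contDiff n (fun q : (ℝ × ℝ) × ℝ => q.1.2 • G (q.1.1, q.2 * q.1.2))
    ((contDiff_fst.snd).smul h1)

abbrev PHI (v : ℝ → ℝ → ℝ) : ℝ × ℝ → ℝ := fun p => v p.1 p.2

noncomputable def I1 (V : ℝ → ℝ → ℝ) : ℝ × ℝ → ℝ := fun p => ∫ τ in (0:ℝ)..p.2, V p.1 τ

noncomputable def I2 (V : ℝ → ℝ → ℝ) : ℝ × ℝ → ℝ := fun p => ∫ τ in (0:ℝ)..p.2, τ * V p.1 τ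

section Vv

variable {V v : ℝ → ℝ → ℝ}
  (hsm : ContDiff ℝ ∞ (fun p : ℝ × ℝ => V p.1 p.2))
  (hv : ∀ x ξ, v x ξ = (∫ τ in (0:ℝ)..ξ, (ξ - τ) * V x τ)
      + ξ * ∫ τ in (0:ℝ)..1, τ * V x τ)

include hsm hv

lemma phi_eq (p : ℝ × ℝ) :
    PHI v p = p.2 * I1 V p - I2 V p + p.2 * I2 V (p.1, 1) := by
  have hVx : Continuous (fun τ => V p.1 τ) :=
    hsm.continuous.comp (continuous_const.prodMk continuous_id)
  have h1 : IntervalIntegrable (fun τ => p.2 * V p.1 τ) volume 0 p.2 :=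
    (continuous_const.mul hVx).intervalIntegrable _ _
  have h2 : IntervalIntegrable (fun τ => τ * V p.1 τ) volume 0 p.2 :=
    (continuous_id.mul hVx).intervalIntegrable _ _
  have key : (∫ τ in (0:ℝ)..p.2, (p.2 - τ) * V p.1 τ)
      = p.2 * I1 V p - I2 V p := by
    have : (fun τ => (p.2 - τ) * V p.1 τ)
        = fun τ => p.2 * V p.1 τ - τ * V p.1 τ := by funext τ; ring
    rw [this, intervalIntegral.integral_sub h1 h2, I1, I2,
      intervalIntegral.integral_const_mul]
  show v p.1 p.2 = _
  rw [hv p.1 p.2, key]; simp [I2]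

lemma phi_contDiff : ContDiff ℝ ∞ (PHI v) := by
  have heq : PHI v = fun p : ℝ × ℝ => p.2 * I1 V p - I2 V p + p.2 * I2 V (p.1, 1) :=
    funext fun p => phi_eq hsm hv p
  rw [heq]
  refine contDiff_infty.2 fun n => ?_
  have hI1 : ContDiff ℝ n (I1 V) := intG_contDiff (fun q : ℝ × ℝ => V q.1 q.2) hsm n
  have hI2 : ContDiff ℝ n (I2 V) :=
    intG_contDiff (fun q : ℝ × ℝ => q.2 * V q.1 q.2) (contDiff_snd.mul hsm) n
  have hc : ContDiff ℝ n (fun p : ℝ × ℝ => I2 V (p.1, 1)) :=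
    hI2.comp (contDiff_fst.prodMk contDiff_const)
  exact ((contDiff_snd.mul hI1).sub hI2).add (contDiff_snd.mul hc)

lemma psi2 (p : ℝ × ℝ) : fderiv ℝ (PHI v) p (0, 1) = I1 V p + I2 V (p.1, 1) := by
  have hVx : Continuous (fun τ => V p.1 τ) :=
    hsm.continuous.comp (continuous_const.prodMk continuous_id)
  have hVx2 : Continuous (fun τ => τ * V p.1 τ) := continuous_id.mul hVx
  have hFTC1 : HasDerivAt (fun ξ => I1 V (p.1, ξ)) (V p.1 p.2) p.2 :=
    intervalIntegral.integral_hasDerivAt_right (hVx.intervalIntegrable _ _)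
      (hVx.stronglyMeasurableAtFilter _ _) hVx.continuousAt
  have hFTC2 : HasDerivAt (fun ξ => I2 V (p.1, ξ)) (p.2 * V p.1 p.2) p.2 :=
    intervalIntegral.integral_hasDerivAt_right (hVx2.intervalIntegrable _ _)
      (hVx2.stronglyMeasurableAtFilter _ _) hVx2.continuousAt
  have hexp : HasDerivAt (fun ξ => PHI v (p.1, ξ)) (I1 V p + I2 V (p.1, 1)) p.2 := by
    have hfun : (fun ξ => PHI v (p.1, ξ)) = fun ξ =>
        ξ * I1 V (p.1, ξ) - I2 V (p.1, ξ) + ξ * I2 V (p.1, 1) :=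
      funext fun ξ => phi_eq hsm hv (p.1, ξ)
    rw [hfun]
    have h := (((hasDerivAt_id p.2).mul hFTC1).sub hFTC2).add
      ((hasDerivAt_id p.2).mul_const (I2 V (p.1, 1)))
    refine h.congr_deriv ?_
    simp
  have habs : HasDerivAt (fun ξ => PHI v (p.1, ξ)) (fderiv ℝ (PHI v) p (0, 1)) p.2 := by
    have h1 : HasDerivAt (fun ξ : ℝ => ((p.1, ξ) : ℝ × ℝ)) ((0:ℝ), (1:ℝ)) p.2 :=
      (hasDerivAt_const _ _).prodMk (hasDerivAt_id _)
    have h2 : HasFDerivAt (PHI v) (fderiv ℝ (PHI v) p) p :=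
      (((phi_contDiff hsm hv).differentiable (by simp)).differentiableAt).hasFDerivAt
    exact h2.comp_hasDerivAt p.2 h1
  exact habs.unique hexp

end Vv

theorem stmt_17 (V : ℝ → ℝ → ℝ)
    (hsmooth : ContDiff ℝ (⊤ : ℕ∞) (fun p : ℝ × ℝ => V p.1 p.2))
    (hper : ∀ x ξ, V x (ξ + 1) = V x ξ)
    (hmean : ∀ x, ∫ ξ in (0:ℝ)..1, V x ξ = 0)
    (v : ℝ → ℝ → ℝ)
    (hv : ∀ x ξ, v x ξ = (∫ τ in (0:ℝ)..ξ, (ξ - τ) * V x τ)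
      + ξ * ∫ τ in (0:ℝ)..1, τ * V x τ)
    (ε : ℝ) (hε : 0 < ε)
    (u : ℝ → ℝ) (hu : ContDiff ℝ 2 u) :
    ∀ x : ℝ,
      -(deriv (deriv (fun y => (1 + ε ^ 2 * v y (y / ε)) * u y)) x)
        + V x (x / ε) * ((1 + ε ^ 2 * v x (x / ε)) * u x)
      = (1 + ε ^ 2 * v x (x / ε)) * (-(deriv (deriv u) x))
        - 2 * ε ^ 2 * deriv (fun y => v y (y / ε)) x * deriv u x
        - ε ^ 2 * (deriv (fun y => deriv (fun z => v z (x / ε)) y) x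
            + (2 / ε) * deriv (fun y => deriv (fun ζ => v y ζ) (x / ε)) x
            - V x (x / ε) * v x (x / ε)) * u x := by
  intro x
  have hεne : ε ≠ 0 := ne_of_gt hε
  have hsm : ContDiff ℝ ∞ (fun p : ℝ × ℝ => V p.1 p.2) := hsmooth.of_le (by simp)
  have hφ : ContDiff ℝ ∞ (PHI v) := phi_contDiff hsm hv
  have hφd : ∀ q : ℝ × ℝ, HasFDerivAt (PHI v) (fderiv ℝ (PHI v) q) q :=
    fun q => ((hφ.differentiable (by simp)).differentiableAt).hasFDerivAt
  have hdφ : ContDiff ℝ ∞ (fderiv ℝ (PHI v)) := hφ.fderiv_right (by simp)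
  have hF2at : HasFDerivAt (fderiv ℝ (PHI v))
      (fderiv ℝ (fderiv ℝ (PHI v)) (x, x / ε)) (x, x / ε) :=
    ((hdφ.differentiable (by simp)).differentiableAt).hasFDerivAt
  have hL0 : ∀ y : ℝ, HasDerivAt (fun y : ℝ => ((y, y / ε) : ℝ × ℝ)) ((1 : ℝ), 1 / ε) y :=
    fun y => (hasDerivAt_id y).prodMk ((hasDerivAt_id y).div_const ε)
  have hL1 : ∀ y : ℝ, HasDerivAt (fun y : ℝ => ((y, x / ε) : ℝ × ℝ)) ((1 : ℝ), (0 : ℝ)) y :=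
    fun y => (hasDerivAt_id y).prodMk (hasDerivAt_const _ _)
  have hL2 : HasDerivAt (fun ξ : ℝ => ((x, ξ) : ℝ × ℝ)) ((0 : ℝ), (1 : ℝ)) (x / ε) :=
    (hasDerivAt_const _ _).prodMk (hasDerivAt_id _)
  have hw' : ∀ y : ℝ, HasDerivAt (fun y => v y (y / ε))
      (fderiv ℝ (PHI v) (y, y / ε) (1, 1 / ε)) y :=
    fun y => by exact (hφd (y, y / ε)).comp_hasDerivAt y (hL0 y)
  have hD0 : HasDerivAt (fun y => fderiv ℝ (PHI v) (y, y / ε))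
      (fderiv ℝ (fderiv ℝ (PHI v)) (x, x / ε) (1, 1 / ε)) x :=
    hF2at.comp_hasDerivAt x (hL0 x)
  have hg' : HasDerivAt (fun y => fderiv ℝ (PHI v) (y, y / ε) (1, 1 / ε))
      (fderiv ℝ (fderiv ℝ (PHI v)) (x, x / ε) (1, 1 / ε) (1, 1 / ε)) x := by
    simpa using hD0.clm_apply (hasDerivAt_const x (((1 : ℝ), 1 / ε) : ℝ × ℝ))
  have hA2 : HasDerivAt (fun y => fderiv ℝ (PHI v) (y, x / ε))
      (fderiv ℝ (fderiv ℝ (PHI v)) (x, x / ε) (1, 0)) x :=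
    hF2at.comp_hasDerivAt x (hL1 x)
  have hA3 : HasDerivAt (fun y => fderiv ℝ (PHI v) (y, x / ε) (1, 0))
      (fderiv ℝ (fderiv ℝ (PHI v)) (x, x / ε) (1, 0) (1, 0)) x := by
    simpa using hA2.clm_apply (hasDerivAt_const x (((1 : ℝ), (0 : ℝ)) : ℝ × ℝ))
  have hB3 : HasDerivAt (fun y => fderiv ℝ (PHI v) (y, x / ε) (0, 1))
      (fderiv ℝ (fderiv ℝ (PHI v)) (x, x / ε) (1, 0) (0, 1)) x := by
    simpa using hA2.clm_apply (hasDerivAt_const x (((0 : ℝ), (1 : ℝ)) : ℝ × ℝ))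
  have hR2 : HasDerivAt (fun ξ => fderiv ℝ (PHI v) (x, ξ) (0, 1))
      (fderiv ℝ (fderiv ℝ (PHI v)) (x, x / ε) (0, 1) (0, 1)) (x / ε) := by
    simpa using (hF2at.comp_hasDerivAt (x / ε) hL2).clm_apply
      (hasDerivAt_const (x / ε) (((0 : ℝ), (1 : ℝ)) : ℝ × ℝ))
  have hVx : Continuous (fun τ => V x τ) :=
    hsm.continuous.comp (continuous_const.prodMk continuous_id)
  have hFTC1 : HasDerivAt (fun ξ => I1 V (x, ξ)) (V x (x / ε)) (x / ε) :=
    intervalIntegral.integral_hasDerivAt_right (hVx.intervalIntegrable _ _)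
      (hVx.stronglyMeasurableAtFilter _ _) hVx.continuousAt
  have hRfun : (fun ξ => fderiv ℝ (PHI v) (x, ξ) (0, 1))
      = fun ξ => I1 V (x, ξ) + I2 V (x, 1) :=
    funext fun ξ => psi2 hsm hv (x, ξ)
  have hR : fderiv ℝ (fderiv ℝ (PHI v)) (x, x / ε) (0, 1) (0, 1) = V x (x / ε) := by
    have h := hRfun ▸ hR2
    exact h.unique (hFTC1.add_const _)
  have hsym : fderiv ℝ (fderiv ℝ (PHI v)) (x, x / ε) ((0 : ℝ), (1 : ℝ)) (1, 0)
      = fderiv ℝ (fderiv ℝ (PHI v)) (x, x / ε) (1, 0) (0, 1) :=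
    second_derivative_symmetric hφd hF2at _ _
  have hdec : (((1 : ℝ), 1 / ε) : ℝ × ℝ)
      = ((1 : ℝ), (0 : ℝ)) + (1 / ε) • (((0 : ℝ), (1 : ℝ)) : ℝ × ℝ) := by
    simp [Prod.ext_iff]
  have hexpand : fderiv ℝ (fderiv ℝ (PHI v)) (x, x / ε) (1, 1 / ε) (1, 1 / ε)
      = fderiv ℝ (fderiv ℝ (PHI v)) (x, x / ε) (1, 0) (1, 0)
        + (2 / ε) * fderiv ℝ (fderiv ℝ (PHI v)) (x, x / ε) (1, 0) (0, 1)
        + (1 / ε) ^ 2 * V x (x / ε) := by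
    rw [hdec]
    simp only [map_add, _root_.map_smul, ContinuousLinearMap.add_apply,
      ContinuousLinearMap.smul_apply, smul_eq_mul]
    rw [hsym, hR]
    ring
  have hu1 : ∀ y : ℝ, HasDerivAt u (deriv u y) y :=
    fun y => ((hu.differentiable two_ne_zero).differentiableAt).hasDerivAt
  have h21 : ContDiff ℝ 1 (deriv u) :=
    (contDiff_succ_iff_deriv.mp (by rw [one_add_one_eq_two]; exact hu)).2.2
  have hu2 : HasDerivAt (deriv u) (deriv (deriv u) x) x :=
    ((h21.differentiable one_ne_zero).differentiableAt).hasDerivAt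
  have hq' : ∀ y : ℝ, HasDerivAt (fun y => 1 + ε ^ 2 * v y (y / ε))
      (ε ^ 2 * fderiv ℝ (PHI v) (y, y / ε) (1, 1 / ε)) y :=
    fun y => ((hw' y).const_mul (ε ^ 2)).const_add 1
  have hfirst : ∀ y : ℝ, HasDerivAt (fun y => (1 + ε ^ 2 * v y (y / ε)) * u y)
      (ε ^ 2 * fderiv ℝ (PHI v) (y, y / ε) (1, 1 / ε) * u y
        + (1 + ε ^ 2 * v y (y / ε)) * deriv u y) y :=
    fun y => (hq' y).mul (hu1 y)
  have hd1 : deriv (fun y => (1 + ε ^ 2 * v y (y / ε)) * u y)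
      = fun y => ε ^ 2 * fderiv ℝ (PHI v) (y, y / ε) (1, 1 / ε) * u y
          + (1 + ε ^ 2 * v y (y / ε)) * deriv u y :=
    funext fun y => (hfirst y).deriv
  have hsecond : HasDerivAt (fun y => ε ^ 2 * fderiv ℝ (PHI v) (y, y / ε) (1, 1 / ε) * u y
        + (1 + ε ^ 2 * v y (y / ε)) * deriv u y)
      (ε ^ 2 * fderiv ℝ (fderiv ℝ (PHI v)) (x, x / ε) (1, 1 / ε) (1, 1 / ε) * u x
        + ε ^ 2 * fderiv ℝ (PHI v) (x, x / ε) (1, 1 / ε) * deriv u x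
        + (ε ^ 2 * fderiv ℝ (PHI v) (x, x / ε) (1, 1 / ε) * deriv u x
          + (1 + ε ^ 2 * v x (x / ε)) * deriv (deriv u) x)) x :=
    ((hg'.const_mul (ε ^ 2)).mul (hu1 x)).add ((hq' x).mul hu2)
  have hA1 : (fun y => deriv (fun z => v z (x / ε)) y)
      = fun y => fderiv ℝ (PHI v) (y, x / ε) (1, 0) :=
    funext fun y => by exact ((hφd (y, x / ε)).comp_hasDerivAt y (hL1 y)).deriv
  have hB1 : (fun y => deriv (fun ζ => v y ζ) (x / ε))
      = fun y => fderiv ℝ (PHI v) (y, x / ε) (0, 1) :=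
    funext fun y => by exact ((hφd (y, x / ε)).comp_hasDerivAt (x / ε)
      ((hasDerivAt_const _ _).prodMk (hasDerivAt_id _))).deriv
  rw [hd1, hsecond.deriv, (hw' x).deriv, hA1, hB1, hA3.deriv, hB3.deriv, hexpand]
  field_simp
  ring
end
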